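/- arXiv:math/0603658 — 3 statements merged into one kernel-verified Lean document; each statement's English description precedes it below -/
import Mathlib

section
/- Let H ∈ (1/2,1), 1/2 < γ < H and H < γ + δ < 1, and let g be as above. Suppose w : ℝ₋ → ℝ satisfies |w(t) − w(s)| ≤ |t − s|^γ (1 + |t| + |s|)^δ for all s, t ≤ 0 and w(0) = 0. Then the function (Aw)(t) = β_H ∫₀^∞ (g(t/r)/r) w(−r) dr is well-defined for t ≥ 0 and there exists a constant C, independent of w, such that |Aw(t) − Aw(s)| ≤ C |t − s|^γ (1 + t + s)^δ for all 0 ≤ s ≤ t. In particular, A is a bounded linear operator from W_{(γ,δ)} to the corresponding space on ℝ₊. -/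
open Set MeasureTheory

/-- The kernel function `g` from the Mandelbrot–Van Ness representation. -/
noncomputable def mvnG (H x : ℝ) : ℝ :=
  x ^ (H - 1/2) + (H - 3/2) * x *
    ∫ u in (0:ℝ)..1, (u + x) ^ (H - 5/2) * (1 - u) ^ (1/2 - H)

open Real
open scoped Interval

namespace MVNaux

set_option linter.unusedSectionVars false

lemma measurable_rpow2 : Measurable fun p : ℝ × ℝ => p.1 ^ p.2 := by
  have h : (fun p : ℝ × ℝ => p.1 ^ p.2) = fun p =>
      if p.1 = 0 then (if p.2 = 0 then 1 else 0)
      else Real.exp (Real.log p.1 * p.2) * if p.1 < 0 then Real.cos (p.2 * π) else 1 := by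
    funext p
    rcases lt_trichotomy p.1 0 with h|h|h
    · rw [Real.rpow_def_of_neg h]; simp [h.ne, h]
    · rcases eq_or_ne p.2 0 with h2|h2 <;>
        simp [h, h2, Real.rpow_zero, Real.zero_rpow]
    · rw [Real.rpow_def_of_pos h]; simp [h.ne', not_lt.mpr h.le]
  rw [h]
  refine Measurable.ite (measurableSet_eq_fun measurable_fst measurable_const)
    (Measurable.ite (measurableSet_eq_fun measurable_snd measurable_const)
      measurable_const measurable_const) ?_
  refine Measurable.mul
    (Real.measurable_exp.comp ((Real.measurable_log.comp measurable_fst).mul measurable_snd)) ?_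
  exact Measurable.ite (measurableSet_lt measurable_fst measurable_const)
    (Real.measurable_cos.comp (measurable_snd.mul measurable_const)) measurable_const

lemma mrpow {α : Type*} [MeasurableSpace α] {f g : α → ℝ}
    (hf : Measurable f) (hg : Measurable g) : Measurable fun x => f x ^ g x :=
  measurable_rpow2.comp (hf.prodMk hg)

lemma integrable_one_sub_rpow {p : ℝ} (hp : -1 < p) :
    IntervalIntegrable (fun u : ℝ => (1 - u) ^ p) volume 0 1 := by
  have h := (intervalIntegral.intervalIntegrable_rpow' (a := 0) (b := 1) hp).comp_sub_left 1
  simpa using h.symm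

lemma integral_one_sub_rpow {p : ℝ} (hp : -1 < p) :
    ∫ u in (0:ℝ)..1, (1 - u) ^ p = 1/(p+1) := by
  have h := intervalIntegral.integral_comp_sub_left (a := (0:ℝ)) (b := 1) (fun u => u ^ p) 1
  simp only [sub_self, sub_zero] at h
  rw [h, integral_rpow (Or.inl hp), Real.one_rpow, Real.zero_rpow (by linarith)]
  norm_num

lemma measurable_mvnG (H : ℝ) : Measurable (mvnG H) := by
  unfold mvnG
  have hsm : StronglyMeasurable fun p : ℝ × ℝ =>
      (p.2 + p.1) ^ (H - 5/2) * (1 - p.2) ^ (1/2 - H) :=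
    ((mrpow (measurable_snd.add measurable_fst) measurable_const).mul
      (mrpow (measurable_const.sub measurable_snd) measurable_const)).stronglyMeasurable
  have h1 : Measurable fun x : ℝ =>
      ∫ u in Ioc (0:ℝ) 1, (u + x) ^ (H - 5/2) * (1 - u) ^ (1/2 - H) :=
    (hsm.integral_prod_right').measurable
  have h2 : (fun x : ℝ => ∫ u in (0:ℝ)..1, (u + x) ^ (H - 5/2) * (1 - u) ^ (1/2 - H))
      = fun x : ℝ => ∫ u in Ioc (0:ℝ) 1, (u + x) ^ (H - 5/2) * (1 - u) ^ (1/2 - H) := by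
    funext x; exact intervalIntegral.integral_of_le zero_le_one
  exact (mrpow measurable_id' measurable_const).add
    ((measurable_const.mul measurable_id').mul (h2 ▸ h1))


section
variable {H : ℝ} (h1 : 1/2 < H) (h2 : H < 1)
include h1 h2

lemma inner_intable {x : ℝ} (hx : 0 < x) :
    IntervalIntegrable (fun u : ℝ => (u + x) ^ (H - 5/2) * (1 - u) ^ (1/2 - H)) volume 0 1 := by
  rw [intervalIntegrable_iff_integrableOn_Ioc_of_le zero_le_one]
  have hb : IntegrableOn (fun u : ℝ => x ^ (H - 5/2) * (1 - u) ^ (1/2 - H)) (Ioc 0 1) := by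
    have h := (integrable_one_sub_rpow (p := 1/2 - H) (by linarith)).const_mul (x ^ (H - 5/2))
    exact (intervalIntegrable_iff_integrableOn_Ioc_of_le zero_le_one).mp h
  refine hb.mono' ?_ ?_
  · exact ((mrpow (measurable_id'.add_const x) measurable_const).mul
      (mrpow (measurable_const.sub measurable_id') measurable_const)).aestronglyMeasurable
  · filter_upwards [ae_restrict_mem measurableSet_Ioc] with u hu
    have hu0 : (0:ℝ) < u := hu.1
    have h1u : 0 ≤ 1 - u := by linarith [hu.2]
    rw [Real.norm_eq_abs, abs_mul, abs_of_nonneg (rpow_nonneg (by linarith) _),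
      abs_of_nonneg (rpow_nonneg h1u _)]
    exact mul_le_mul_of_nonneg_right
      (rpow_le_rpow_of_nonpos hx (by linarith) (by linarith)) (rpow_nonneg h1u _)

lemma inner_nonneg {x : ℝ} (hx : 0 < x) :
    0 ≤ ∫ u in (0:ℝ)..1, (u + x) ^ (H - 5/2) * (1 - u) ^ (1/2 - H) := by
  apply intervalIntegral.integral_nonneg zero_le_one
  intro u hu
  exact mul_nonneg (rpow_nonneg (by linarith [hu.1]) _) (rpow_nonneg (by linarith [hu.2]) _)

lemma inner_le {x : ℝ} (hx : 0 < x) :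
    (∫ u in (0:ℝ)..1, (u + x) ^ (H - 5/2) * (1 - u) ^ (1/2 - H))
      ≤ x ^ (H - 5/2) * (1/(3/2 - H)) := by
  have key : (∫ u in (0:ℝ)..1, (u + x) ^ (H - 5/2) * (1 - u) ^ (1/2 - H))
      ≤ ∫ u in (0:ℝ)..1, x ^ (H - 5/2) * (1 - u) ^ (1/2 - H) := by
    refine intervalIntegral.integral_mono_on zero_le_one (inner_intable h1 h2 hx)
      ((integrable_one_sub_rpow (by linarith)).const_mul _) ?_
    intro u hu
    exact mul_le_mul_of_nonneg_right
      (rpow_le_rpow_of_nonpos hx (by linarith [hu.1]) (by linarith))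
      (rpow_nonneg (by linarith [hu.2]) _)
  calc _ ≤ ∫ u in (0:ℝ)..1, x ^ (H - 5/2) * (1 - u) ^ (1/2 - H) := key
  _ = x ^ (H - 5/2) * ∫ u in (0:ℝ)..1, (1 - u) ^ (1/2 - H) := by
        rw [intervalIntegral.integral_const_mul]
  _ = x ^ (H - 5/2) * (1/(3/2 - H)) := by
        rw [integral_one_sub_rpow (by linarith), show 1/2 - H + (1:ℝ) = 3/2 - H by ring]

lemma abs_mvnG_le_crude {x : ℝ} (hx : 0 < x) :
    |mvnG H x| ≤ x ^ (H - 1/2) + x ^ (H - 3/2) := by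
  unfold mvnG
  have hxx : x * x ^ (H - 5/2) = x ^ (H - 3/2) := by
    rw [show H - 3/2 = 1 + (H - 5/2) by ring, Real.rpow_add hx, Real.rpow_one]
  refine (abs_add_le _ _).trans ?_
  gcongr
  · exact le_of_eq (abs_of_nonneg (rpow_nonneg hx.le _))
  · rw [abs_mul, abs_mul, abs_of_pos hx,
      abs_of_nonneg (inner_nonneg h1 h2 hx), abs_of_neg (show H - 3/2 < 0 by linarith)]
    calc -(H - 3/2) * x * (∫ u in (0:ℝ)..1, (u + x) ^ (H - 5/2) * (1 - u) ^ (1/2 - H))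
        ≤ -(H - 3/2) * x * (x ^ (H - 5/2) * (1/(3/2 - H))) := by
          gcongr
          · exact mul_nonneg (by linarith) hx.le
          · exact inner_le h1 h2 hx
      _ = (3/2 - H) * (1/(3/2 - H)) * (x * x ^ (H - 5/2)) := by ring
      _ = x * x ^ (H - 5/2) := by
          rw [mul_one_div, div_self (show (3/2 - H) ≠ 0 by linarith), one_mul]
      _ = x ^ (H - 3/2) := hxx

/-- The correction integral `K`. -/
noncomputable def Kfun (H x : ℝ) : ℝ :=
  ∫ u in (0:ℝ)..1, (u + x) ^ (H - 5/2) * ((1 - u) ^ (1/2 - H) - 1)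

omit h1 h2 in
lemma J_intable {x : ℝ} (hx : 0 < x) :
    IntervalIntegrable (fun u : ℝ => (u + x) ^ (H - 5/2)) volume 0 1 := by
  have h0 : (0:ℝ) ∉ [[x, 1 + x]] := by
    rw [Set.uIcc_of_le (by linarith)]
    intro h; exact absurd h.1 (by linarith)
  have h := (intervalIntegral.intervalIntegrable_rpow (r := H - 5/2)
    (a := x) (b := 1 + x) (μ := volume) (Or.inr h0)).comp_add_right x
  have e1 : x - x = (0:ℝ) := by ring
  have e2 : 1 + x - x = (1:ℝ) := by ring
  rw [e1, e2] at h
  exact h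

omit h1 h2 in
lemma J_eval {x : ℝ} (hx : 0 < x) (hne : H - 3/2 ≠ 0) :
    ∫ u in (0:ℝ)..1, (u + x) ^ (H - 5/2)
      = ((1 + x) ^ (H - 3/2) - x ^ (H - 3/2)) / (H - 3/2) := by
  have h := intervalIntegral.integral_comp_add_right (a := (0:ℝ)) (b := 1)
    (fun v => v ^ (H - 5/2)) x
  rw [h, zero_add]
  have h0 : (0:ℝ) ∉ [[x, 1 + x]] := by
    rw [Set.uIcc_of_le (by linarith)]
    intro hmem; exact absurd hmem.1 (by linarith)
  rw [integral_rpow (Or.inr ⟨(by intro hc; apply hne; linarith : H - 5/2 ≠ -1), h0⟩),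
    show H - 5/2 + 1 = H - 3/2 by ring]

lemma K_intable {x : ℝ} (hx : 0 < x) :
    IntervalIntegrable (fun u : ℝ => (u + x) ^ (H - 5/2) * ((1 - u) ^ (1/2 - H) - 1))
      volume 0 1 := by
  have h : (fun u : ℝ => (u + x) ^ (H - 5/2) * ((1 - u) ^ (1/2 - H) - 1))
      = fun u : ℝ => (u + x) ^ (H - 5/2) * (1 - u) ^ (1/2 - H) - (u + x) ^ (H - 5/2) := by
    funext u; ring
  rw [h]
  exact (inner_intable h1 h2 hx).sub (J_intable hx)

lemma mvnG_eq {x : ℝ} (hx : 0 < x) :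
    mvnG H x = x * (1 + x) ^ (H - 3/2) + (H - 3/2) * x * Kfun H x := by
  have hne : H - 3/2 ≠ 0 := by intro hc; nlinarith [hc]
  have hxx : x * x ^ (H - 3/2) = x ^ (H - 1/2) := by
    rw [show H - 1/2 = 1 + (H - 3/2) by ring, Real.rpow_add hx, Real.rpow_one]
  have hsplit : (∫ u in (0:ℝ)..1, (u + x) ^ (H - 5/2) * (1 - u) ^ (1/2 - H))
      = (∫ u in (0:ℝ)..1, (u + x) ^ (H - 5/2)) + Kfun H x := by
    rw [Kfun, ← intervalIntegral.integral_add (J_intable hx) (K_intable h1 h2 hx)]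
    congr 1; funext u; ring
  unfold mvnG
  rw [hsplit, J_eval hx hne]
  have hcancel : (H - 3/2) * (((1 + x) ^ (H - 3/2) - x ^ (H - 3/2)) / (H - 3/2))
      = (1 + x) ^ (H - 3/2) - x ^ (H - 3/2) := mul_div_cancel₀ _ hne
  calc x ^ (H - 1/2) + (H - 3/2) * x
        * (((1 + x) ^ (H - 3/2) - x ^ (H - 3/2)) / (H - 3/2) + Kfun H x)
      = x ^ (H - 1/2) + (x * ((H - 3/2) * (((1 + x) ^ (H - 3/2) - x ^ (H - 3/2)) / (H - 3/2)))
          + (H - 3/2) * x * Kfun H x) := by ring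
    _ = x ^ (H - 1/2) + (x * ((1 + x) ^ (H - 3/2) - x ^ (H - 3/2))
          + (H - 3/2) * x * Kfun H x) := by rw [hcancel]
    _ = x * (1 + x) ^ (H - 3/2) + (H - 3/2) * x * Kfun H x := by
        linear_combination -hxx

omit h2 in
lemma K_nonneg {x : ℝ} (hx : 0 < x) : 0 ≤ Kfun H x := by
  rw [Kfun, intervalIntegral.integral_of_le zero_le_one]
  refine setIntegral_nonneg_ae measurableSet_Ioc ?_
  have hne : ∀ᵐ u : ℝ, u ≠ 1 := by
    rw [ae_iff]
    have : {u : ℝ | ¬u ≠ 1} = {1} := by ext u; simp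
    rw [this]
    exact measure_singleton 1
  filter_upwards [hne] with u hu1 hu
  have hu0 : (0:ℝ) < u := hu.1
  have h1u : 0 < 1 - u := lt_of_le_of_ne (by linarith [hu.2]) (by intro hc; exact hu1 (by linarith))
  have hone : 1 ≤ (1 - u) ^ (1/2 - H) :=
    Real.one_le_rpow_of_pos_of_le_one_of_nonpos h1u (by linarith) (by linarith)
  exact mul_nonneg (rpow_nonneg (by linarith) _) (by linarith)

lemma K_le {x : ℝ} (hx : 0 < x) :
    Kfun H x ≤ 2 * ((1/2) ^ (H - 1/2) / (H - 1/2))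
      + (1/2) ^ (H - 5/2) * ((1/2) ^ (3/2 - H) / (3/2 - H)) := by
  have hsub1 : ([[ (0:ℝ), 1/2 ]] : Set ℝ) ⊆ [[ (0:ℝ), 1 ]] := by
    rw [Set.uIcc_of_le (by norm_num : (0:ℝ) ≤ 1/2), Set.uIcc_of_le zero_le_one]
    exact Set.Icc_subset_Icc (le_refl _) (by norm_num)
  have hsub2 : ([[ (1/2:ℝ), 1 ]] : Set ℝ) ⊆ [[ (0:ℝ), 1 ]] := by
    rw [Set.uIcc_of_le (by norm_num : (1/2:ℝ) ≤ 1), Set.uIcc_of_le zero_le_one]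
    exact Set.Icc_subset_Icc (by norm_num) (le_refl _)
  have hi1 := (K_intable h1 h2 hx).mono_set hsub1
  have hi2 := (K_intable h1 h2 hx).mono_set hsub2
  have hsplit : Kfun H x
      = (∫ u in (0:ℝ)..(1/2), (u + x) ^ (H - 5/2) * ((1 - u) ^ (1/2 - H) - 1))
        + ∫ u in (1/2:ℝ)..1, (u + x) ^ (H - 5/2) * ((1 - u) ^ (1/2 - H) - 1) := by
    rw [Kfun, ← intervalIntegral.integral_add_adjacent_intervals hi1 hi2]
  rw [hsplit]
  have piece1 : (∫ u in (0:ℝ)..(1/2), (u + x) ^ (H - 5/2) * ((1 - u) ^ (1/2 - H) - 1))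
      ≤ 2 * ((1/2) ^ (H - 1/2) / (H - 1/2)) := by
    have hb : IntervalIntegrable (fun u : ℝ => 2 * u ^ (H - 3/2)) volume 0 (1/2) :=
      (intervalIntegral.intervalIntegrable_rpow' (by linarith)).const_mul 2
    have hmono : (∫ u in (0:ℝ)..(1/2), (u + x) ^ (H - 5/2) * ((1 - u) ^ (1/2 - H) - 1))
        ≤ ∫ u in (0:ℝ)..(1/2), 2 * u ^ (H - 3/2) := by
      rw [intervalIntegral.integral_of_le (by norm_num : (0:ℝ) ≤ 1/2),
        intervalIntegral.integral_of_le (by norm_num : (0:ℝ) ≤ 1/2)]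
      refine setIntegral_mono_on
        ((intervalIntegrable_iff_integrableOn_Ioc_of_le (by norm_num)).mp hi1)
        ((intervalIntegrable_iff_integrableOn_Ioc_of_le (by norm_num)).mp hb)
        measurableSet_Ioc ?_
      intro u hu
      have hu0 : (0:ℝ) < u := hu.1
      have hu2 : u ≤ 1/2 := hu.2
      have hf1 : (u + x) ^ (H - 5/2) ≤ u ^ (H - 5/2) :=
        rpow_le_rpow_of_nonpos hu0 (by linarith) (by linarith)
      have key2 : (1 - u) ^ (1/2 - H) - 1 ≤ 2 * u := by
        have h1u : (0:ℝ) < 1 - u := by linarith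
        have h1u1 : 1 - u ≤ 1 := by linarith
        have hb1 : 1 - u ≤ (1 - u) ^ (H - 1/2) := by
          have := Real.rpow_le_rpow_of_exponent_ge h1u h1u1 (by linarith : H - 1/2 ≤ 1)
          rwa [Real.rpow_one] at this
        have hbpos : (0:ℝ) < (1 - u) ^ (H - 1/2) := Real.rpow_pos_of_pos h1u _
        have hinv : (1 - u) ^ (1/2 - H) = ((1 - u) ^ (H - 1/2))⁻¹ := by
          rw [← Real.rpow_neg (by linarith)]
          congr 1
          ring
        have hle2 : (1 - u) ^ (1/2 - H) ≤ 2 := by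
          rw [hinv]
          calc ((1 - u) ^ (H - 1/2))⁻¹ ≤ (1 - u)⁻¹ :=
                inv_anti₀ h1u hb1
            _ ≤ 2 := by
                rw [inv_le_comm₀ (by linarith) (by norm_num)]
                linarith
        have hb2 : (1 - u) ^ (H - 1/2) ≤ 1 :=
          Real.rpow_le_one h1u.le h1u1 (by linarith)
        have hfac : (1 - u) ^ (1/2 - H) - 1
            = (1 - u) ^ (1/2 - H) * (1 - (1 - u) ^ (H - 1/2)) := by
          have : (1 - u) ^ (1/2 - H) * (1 - u) ^ (H - 1/2) = 1 := by
            rw [← Real.rpow_add h1u]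
            norm_num
          nlinarith [this]
        rw [hfac]
        calc (1 - u) ^ (1/2 - H) * (1 - (1 - u) ^ (H - 1/2))
            ≤ 2 * (1 - (1 - u) ^ (H - 1/2)) := by
              apply mul_le_mul_of_nonneg_right hle2
              linarith
          _ ≤ 2 * u := by nlinarith [hb1]
      have hnn : (0:ℝ) ≤ (1 - u) ^ (1/2 - H) - 1 := by
        have := Real.one_le_rpow_of_pos_of_le_one_of_nonpos
          (show (0:ℝ) < 1 - u by linarith) (by linarith) (by linarith : 1/2 - H ≤ 0)
        linarith
      calc (u + x) ^ (H - 5/2) * ((1 - u) ^ (1/2 - H) - 1)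
          ≤ u ^ (H - 5/2) * (2 * u) := by
            apply mul_le_mul hf1 key2 hnn (rpow_nonneg hu0.le _)
        _ = 2 * u ^ (H - 3/2) := by
            rw [show H - 3/2 = (H - 5/2) + 1 by ring, Real.rpow_add hu0, Real.rpow_one]
            ring
    refine hmono.trans ?_
    rw [intervalIntegral.integral_const_mul, integral_rpow (Or.inl (by linarith)),
      show H - 3/2 + 1 = H - 1/2 by ring, Real.zero_rpow (by intro hc; nlinarith [hc])]
    norm_num
  have piece2 : (∫ u in (1/2:ℝ)..1, (u + x) ^ (H - 5/2) * ((1 - u) ^ (1/2 - H) - 1))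
      ≤ (1/2) ^ (H - 5/2) * ((1/2) ^ (3/2 - H) / (3/2 - H)) := by
    have hb : IntervalIntegrable (fun u : ℝ => (1/2:ℝ) ^ (H - 5/2) * (1 - u) ^ (1/2 - H))
        volume (1/2) 1 :=
      ((integrable_one_sub_rpow (by linarith)).mono_set hsub2).const_mul _
    have hmono : (∫ u in (1/2:ℝ)..1, (u + x) ^ (H - 5/2) * ((1 - u) ^ (1/2 - H) - 1))
        ≤ ∫ u in (1/2:ℝ)..1, (1/2:ℝ) ^ (H - 5/2) * (1 - u) ^ (1/2 - H) := by
      refine intervalIntegral.integral_mono_on (by norm_num) hi2 hb ?_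
      intro u hu
      have hu1 : (1/2:ℝ) ≤ u := hu.1
      have hu2 : u ≤ 1 := hu.2
      have h1u : (0:ℝ) ≤ 1 - u := by linarith
      calc (u + x) ^ (H - 5/2) * ((1 - u) ^ (1/2 - H) - 1)
          ≤ (u + x) ^ (H - 5/2) * (1 - u) ^ (1/2 - H) := by
            apply mul_le_mul_of_nonneg_left (by linarith) (rpow_nonneg (by linarith) _)
        _ ≤ (1/2) ^ (H - 5/2) * (1 - u) ^ (1/2 - H) := by
            apply mul_le_mul_of_nonneg_right
              (rpow_le_rpow_of_nonpos (by norm_num) (by linarith) (by linarith))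
              (rpow_nonneg h1u _)
    refine hmono.trans ?_
    rw [intervalIntegral.integral_const_mul]
    apply mul_le_mul_of_nonneg_left _ (rpow_nonneg (by norm_num) _)
    have hcs := intervalIntegral.integral_comp_sub_left (a := (1/2:ℝ)) (b := 1)
      (fun v => v ^ (1/2 - H)) 1
    norm_num at hcs
    rw [hcs, integral_rpow (Or.inl (by linarith)),
      show 1/2 - H + 1 = 3/2 - H by ring, Real.zero_rpow (by intro hc; nlinarith [hc])]
    norm_num
  linarith


lemma exists_gbound : ∃ Cg : ℝ, 0 < Cg ∧
    ∀ x : ℝ, 0 < x → |mvnG H x| ≤ Cg * min x (x ^ (H - 1/2)) := by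
  set K0 : ℝ := 2 * ((1/2) ^ (H - 1/2) / (H - 1/2))
      + (1/2) ^ (H - 5/2) * ((1/2) ^ (3/2 - H) / (3/2 - H)) with hK0
  have hK0nn : 0 ≤ K0 := le_trans (K_nonneg h1 (x := 1) one_pos) (K_le h1 h2 one_pos)
  refine ⟨2 + (3/2 - H) * K0, by nlinarith [mul_nonneg (show (0:ℝ) ≤ 3/2 - H by linarith) hK0nn], ?_⟩
  intro x hx
  have hlin : |mvnG H x| ≤ (1 + (3/2 - H) * K0) * x := by
    rw [mvnG_eq h1 h2 hx]
    refine (abs_add_le _ _).trans ?_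
    have t1 : |x * (1 + x) ^ (H - 3/2)| ≤ x := by
      rw [abs_mul, abs_of_pos hx, abs_of_nonneg (rpow_nonneg (by linarith) _)]
      calc x * (1 + x) ^ (H - 3/2) ≤ x * 1 := by
            apply mul_le_mul_of_nonneg_left
              (Real.rpow_le_one_of_one_le_of_nonpos (by linarith) (by linarith)) hx.le
        _ = x := mul_one x
    have t2 : |(H - 3/2) * x * Kfun H x| ≤ (3/2 - H) * K0 * x := by
      rw [abs_mul, abs_mul, abs_of_pos hx, abs_of_neg (show H - 3/2 < 0 by linarith),
        abs_of_nonneg (K_nonneg h1 hx)]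
      calc -(H - 3/2) * x * Kfun H x ≤ -(H - 3/2) * x * K0 := by
            apply mul_le_mul_of_nonneg_left (K_le h1 h2 hx)
              (mul_nonneg (by linarith) hx.le)
        _ = (3/2 - H) * K0 * x := by ring
    calc |x * (1 + x) ^ (H - 3/2)| + |(H - 3/2) * x * Kfun H x|
        ≤ x + (3/2 - H) * K0 * x := add_le_add t1 t2
      _ = (1 + (3/2 - H) * K0) * x := by ring
  rcases le_or_gt x 1 with hx1 | hx1
  · have hmin : min x (x ^ (H - 1/2)) = x := by
      apply min_eq_left
      have := Real.rpow_le_rpow_of_exponent_ge hx hx1 (by linarith : H - 1/2 ≤ 1)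
      rwa [Real.rpow_one] at this
    rw [hmin]
    refine hlin.trans ?_
    apply mul_le_mul_of_nonneg_right (by linarith) hx.le
  · have hmin : min x (x ^ (H - 1/2)) = x ^ (H - 1/2) := by
      apply min_eq_right
      have := Real.rpow_le_rpow_of_exponent_le hx1.le (by linarith : H - 1/2 ≤ 1)
      rwa [Real.rpow_one] at this
    rw [hmin]
    refine (abs_mvnG_le_crude h1 h2 hx).trans ?_
    have h12 : x ^ (H - 3/2) ≤ x ^ (H - 1/2) :=
      Real.rpow_le_rpow_of_exponent_le hx1.le (by linarith)
    have hpow : (0:ℝ) ≤ x ^ (H - 1/2) := rpow_nonneg hx.le _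
    nlinarith [mul_nonneg (mul_nonneg (show (0:ℝ) ≤ 3/2 - H by linarith) hK0nn) hpow]

end

lemma integrableOn_split {f : ℝ → ℝ} (hm : Measurable f)
    {p q C1 C2 : ℝ} (hp : -1 < p) (hq : q < -1)
    (hb1 : ∀ y ∈ Ioc (0:ℝ) 1, |f y| ≤ C1 * y ^ p)
    (hb2 : ∀ y ∈ Ioi (1:ℝ), |f y| ≤ C2 * y ^ q) :
    IntegrableOn f (Ioi 0) := by
  have hu : Ioi (0:ℝ) = Ioc 0 1 ∪ Ioi 1 := (Ioc_union_Ioi_eq_Ioi zero_le_one).symm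
  rw [hu]
  refine IntegrableOn.union ?_ ?_
  · have hbint : IntegrableOn (fun y : ℝ => C1 * y ^ p) (Ioc 0 1) :=
      (intervalIntegrable_iff_integrableOn_Ioc_of_le zero_le_one).mp
        ((intervalIntegral.intervalIntegrable_rpow' hp).const_mul C1)
    refine hbint.mono' hm.aestronglyMeasurable.restrict ?_
    filter_upwards [ae_restrict_mem measurableSet_Ioc] with y hy
    rw [Real.norm_eq_abs]
    exact hb1 y hy
  · have hbint : IntegrableOn (fun y : ℝ => C2 * y ^ q) (Ioi 1) :=
      (integrableOn_Ioi_rpow_of_lt hq one_pos).const_mul C2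
    refine hbint.mono' hm.aestronglyMeasurable.restrict ?_
    filter_upwards [ae_restrict_mem measurableSet_Ioi] with y hy
    rw [Real.norm_eq_abs]
    exact hb2 y hy

/-- master dominating function -/
noncomputable def mfun (H γ δ y : ℝ) : ℝ :=
  min y (y ^ (H - 1/2)) * y⁻¹ * (y⁻¹) ^ γ * (1 + y⁻¹) ^ δ

lemma measurable_mfun (H γ δ : ℝ) : Measurable (mfun H γ δ) := by
  unfold mfun
  exact (((measurable_id'.min (mrpow measurable_id' measurable_const)).mul
    measurable_inv).mul (mrpow measurable_inv measurable_const)).mul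
    (mrpow (measurable_const.add measurable_inv) measurable_const)

lemma mfun_nonneg {H γ δ y : ℝ} (hy : 0 < y) : 0 ≤ mfun H γ δ y := by
  unfold mfun
  have : 0 ≤ min y (y ^ (H - 1/2)) := le_min hy.le (rpow_nonneg hy.le _)
  positivity

section
variable {H γ δ : ℝ} (h1 : 1/2 < H) (h2 : H < 1) (hγ : 1/2 < γ) (hγH : γ < H)
  (hHδ : H < γ + δ) (hδ : γ + δ < 1)

include hγ hγH hHδ in
lemma delta_pos : 0 < δ := by linarith

include h1 h2 hγ hγH hHδ hδ in
lemma integrableOn_mfun : IntegrableOn (mfun H γ δ) (Ioi 0) := by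
  have hδ0 : 0 < δ := by linarith
  refine integrableOn_split (measurable_mfun H γ δ) (p := -(γ+δ)) (q := (H - 1/2) - 1 - γ)
    (C1 := 2 ^ δ) (C2 := 2 ^ δ) (by linarith) (by linarith) ?_ ?_
  · intro y hy
    have hy0 : (0:ℝ) < y := hy.1
    have hyi : (0:ℝ) < y⁻¹ := inv_pos.mpr hy0
    have h1y : (1:ℝ) ≤ y⁻¹ := (one_le_inv₀ hy0).mpr hy.2
    rw [abs_of_nonneg (mfun_nonneg hy0)]
    unfold mfun
    calc min y (y ^ (H - 1/2)) * y⁻¹ * (y⁻¹) ^ γ * (1 + y⁻¹) ^ δ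
        ≤ y * y⁻¹ * (y⁻¹) ^ γ * (2 * y⁻¹) ^ δ := by
          refine mul_le_mul (mul_le_mul_of_nonneg_right
            (mul_le_mul_of_nonneg_right (min_le_left _ _) hyi.le)
            (rpow_nonneg hyi.le _)) (Real.rpow_le_rpow (by positivity)
            (by linarith) hδ0.le) (rpow_nonneg (by positivity) _) (by positivity)
      _ = 2 ^ δ * y ^ (-(γ + δ)) := by
          rw [mul_inv_cancel₀ hy0.ne', one_mul,
            Real.mul_rpow (by norm_num) hyi.le,
            Real.inv_rpow hy0.le, Real.inv_rpow hy0.le,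
            ← Real.rpow_neg hy0.le, ← Real.rpow_neg hy0.le,
            show y ^ (-γ) * (2 ^ δ * y ^ (-δ)) = 2 ^ δ * (y ^ (-γ) * y ^ (-δ)) by ring,
            ← Real.rpow_add hy0, show -γ + -δ = -(γ + δ) by ring]
  · intro y hy
    have hy0 : (0:ℝ) < y := lt_trans one_pos hy
    have hyi : (0:ℝ) < y⁻¹ := inv_pos.mpr hy0
    have h1y : y⁻¹ ≤ 1 := by
      rw [inv_le_one_iff₀]; right; exact hy.le
    rw [abs_of_nonneg (mfun_nonneg hy0)]
    unfold mfun
    calc min y (y ^ (H - 1/2)) * y⁻¹ * (y⁻¹) ^ γ * (1 + y⁻¹) ^ δ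
        ≤ y ^ (H - 1/2) * y⁻¹ * (y⁻¹) ^ γ * 2 ^ δ := by
          refine mul_le_mul (mul_le_mul_of_nonneg_right
            (mul_le_mul_of_nonneg_right (min_le_right _ _) hyi.le)
            (rpow_nonneg hyi.le _)) (Real.rpow_le_rpow (by positivity)
            (by linarith) hδ0.le) (rpow_nonneg (by positivity) _) ?_
          have : 0 ≤ y ^ (H - 1/2) := rpow_nonneg hy0.le _
          positivity
      _ = 2 ^ δ * y ^ ((H - 1/2) - 1 - γ) := by
          rw [Real.inv_rpow hy0.le, ← Real.rpow_neg hy0.le,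
            show y⁻¹ = y ^ (-1:ℝ) from (Real.rpow_neg_one y).symm,
            ← Real.rpow_add hy0, ← Real.rpow_add hy0,
            show H - 1/2 + -1 + -γ = H - 1/2 - 1 - γ by ring]
          ring

omit hγH hHδ hδ h2 in
include hγ hγH hHδ in
lemma pow_collapse {r : ℝ} (hr : 0 < r) (a b : ℝ) :
    (r⁻¹) ^ a * r⁻¹ * r ^ b = r ^ (b - a - 1) := by
  rw [Real.inv_rpow hr.le, ← Real.rpow_neg hr.le,
    show r⁻¹ = r ^ (-1:ℝ) from (Real.rpow_neg_one r).symm,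
    ← Real.rpow_add hr, ← Real.rpow_add hr, show -a + -1 + b = b - a - 1 by ring]

end

lemma pow_collapse' {r : ℝ} (hr : 0 < r) (a b : ℝ) :
    (r⁻¹) ^ a * r⁻¹ * r ^ b = r ^ (b - a - 1) := by
  rw [Real.inv_rpow hr.le, ← Real.rpow_neg hr.le,
    show r⁻¹ = r ^ (-1:ℝ) from (Real.rpow_neg_one r).symm,
    ← Real.rpow_add hr, ← Real.rpow_add hr, show -a + -1 + b = b - a - 1 by ring]

lemma pow_collapse2 {r : ℝ} (hr : 0 < r) (b : ℝ) :
    r⁻¹ * r⁻¹ * r ^ b = r ^ (b - 2) := by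
  rw [show r⁻¹ = r ^ (-1:ℝ) from (Real.rpow_neg_one r).symm,
    ← Real.rpow_add hr, ← Real.rpow_add hr, show (-1:ℝ) + -1 + b = b - 2 by ring]

section Main
variable {H γ δ : ℝ} (h1 : 1/2 < H) (h2 : H < 1) (hγ : 1/2 < γ) (hγH : γ < H)
  (hHδ : H < γ + δ) (hδ1 : γ + δ < 1)
  {w : ℝ → ℝ} (hwc : Continuous w) (hw0 : w 0 = 0)
  (hw : ∀ s t : ℝ, s ≤ 0 → t ≤ 0 → |w t - w s| ≤ |t - s| ^ γ * (1 + |t| + |s|) ^ δ)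

set_option linter.unusedSectionVars false

include h1 h2 hγ hγH hHδ hδ1 hwc hw0 hw

lemma wdiff_bound {y s t : ℝ} (hy : 0 < y) (hs : 0 ≤ s) (hst : s ≤ t) :
    |w (-(t/y)) - w (-(s/y))| ≤
      ((t - s) ^ γ * (y⁻¹) ^ γ) * ((1 + t + s) ^ δ * (1 + y⁻¹) ^ δ) := by
  have hδ0 : 0 < δ := by linarith
  have ht0 : 0 ≤ t := le_trans hs hst
  have hyi : (0:ℝ) < y⁻¹ := inv_pos.mpr hy
  have h := hw (-(s/y)) (-(t/y))
    (neg_nonpos.mpr (div_nonneg hs hy.le)) (neg_nonpos.mpr (div_nonneg ht0 hy.le))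
  have hts : 0 ≤ t - s := by linarith
  have e1 : |(-(t/y)) - (-(s/y))| = (t - s) * y⁻¹ := by
    rw [show (-(t/y)) - (-(s/y)) = -((t - s)/y) by ring, abs_neg,
      abs_of_nonneg (div_nonneg hts hy.le), div_eq_mul_inv]
  have e2 : |(-(t/y))| = t * y⁻¹ := by
    rw [abs_neg, abs_of_nonneg (div_nonneg ht0 hy.le), div_eq_mul_inv]
  have e3 : |(-(s/y))| = s * y⁻¹ := by
    rw [abs_neg, abs_of_nonneg (div_nonneg hs hy.le), div_eq_mul_inv]
  rw [e1, e2, e3] at h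
  refine h.trans ?_
  refine mul_le_mul (le_of_eq (Real.mul_rpow hts hyi.le)) ?_
    (rpow_nonneg (by positivity) _) (by positivity)
  calc (1 + t * y⁻¹ + s * y⁻¹) ^ δ
      ≤ ((1 + t + s) * (1 + y⁻¹)) ^ δ := by
        refine Real.rpow_le_rpow (by positivity) ?_ hδ0.le
        nlinarith [hyi.le, ht0, hs]
    _ = (1 + t + s) ^ δ * (1 + y⁻¹) ^ δ :=
        Real.mul_rpow (by positivity) (by positivity)

lemma pointwise_bound {Cg : ℝ} (hCg0 : 0 ≤ Cg)
    (hCg : ∀ x : ℝ, 0 < x → |mvnG H x| ≤ Cg * min x (x ^ (H - 1/2)))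
    {y s t : ℝ} (hy : 0 < y) (hs : 0 ≤ s) (hst : s ≤ t) :
    |mvnG H y / y * (w (-(t/y)) - w (-(s/y)))| ≤
      (Cg * (t - s) ^ γ * (1 + t + s) ^ δ) * mfun H γ δ y := by
  have hmin : (0:ℝ) ≤ min y (y ^ (H - 1/2)) := le_min hy.le (rpow_nonneg hy.le _)
  have hyi : (0:ℝ) < y⁻¹ := inv_pos.mpr hy
  rw [abs_mul, abs_div, abs_of_pos hy, div_eq_mul_inv]
  calc |mvnG H y| * y⁻¹ * |w (-(t/y)) - w (-(s/y))|
      ≤ (Cg * min y (y ^ (H - 1/2)) * y⁻¹) *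
          (((t - s) ^ γ * (y⁻¹) ^ γ) * ((1 + t + s) ^ δ * (1 + y⁻¹) ^ δ)) := by
        refine mul_le_mul (mul_le_mul_of_nonneg_right (hCg y hy) hyi.le)
          (wdiff_bound h1 h2 hγ hγH hHδ hδ1 hwc hw0 hw hy hs hst) (abs_nonneg _) (by positivity)
    _ = (Cg * (t - s) ^ γ * (1 + t + s) ^ δ) * mfun H γ δ y := by
        unfold mfun; ring

lemma pointwise_bound0 {Cg : ℝ} (hCg0 : 0 ≤ Cg)
    (hCg : ∀ x : ℝ, 0 < x → |mvnG H x| ≤ Cg * min x (x ^ (H - 1/2)))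
    {y t : ℝ} (hy : 0 < y) (ht : 0 ≤ t) :
    |mvnG H y / y * w (-(t/y))| ≤
      (Cg * t ^ γ * (1 + t) ^ δ) * mfun H γ δ y := by
  have h := pointwise_bound h1 h2 hγ hγH hHδ hδ1 hwc hw0 hw hCg0 hCg (s := 0) (t := t) hy le_rfl ht
  simpa [hw0] using h

lemma measurable_G (t : ℝ) :
    Measurable fun y : ℝ => mvnG H y / y * w (-(t/y)) :=
  ((measurable_mvnG H).div measurable_id').mul
    (hwc.measurable.comp (measurable_const.div measurable_id').neg)

include hwc hw hw0 in
lemma integrableOn_G {Cg : ℝ} (hCg0 : 0 ≤ Cg)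
    (hCg : ∀ x : ℝ, 0 < x → |mvnG H x| ≤ Cg * min x (x ^ (H - 1/2)))
    {t : ℝ} (ht : 0 ≤ t) :
    IntegrableOn (fun y : ℝ => mvnG H y / y * w (-(t/y))) (Ioi 0) := by
  refine ((integrableOn_mfun h1 h2 hγ hγH hHδ hδ1).const_mul
    (Cg * t ^ γ * (1 + t) ^ δ)).mono' (measurable_G h1 h2 hγ hγH hHδ hδ1 hwc hw0 hw t).aestronglyMeasurable.restrict ?_
  filter_upwards [ae_restrict_mem measurableSet_Ioi] with y hy
  rw [Real.norm_eq_abs]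
  exact pointwise_bound0 h1 h2 hγ hγH hHδ hδ1 hwc hw0 hw hCg0 hCg hy ht

lemma integrableOn_T1 {Cg : ℝ} (hCg0 : 0 ≤ Cg)
    (hCg : ∀ x : ℝ, 0 < x → |mvnG H x| ≤ Cg * min x (x ^ (H - 1/2)))
    {t : ℝ} (ht : 0 < t) :
    IntegrableOn (fun r : ℝ => mvnG H (t/r) / r * w (-r)) (Ioi 0) := by
  have hδ0 : 0 < δ := by linarith
  have hmeas : Measurable fun r : ℝ => mvnG H (t/r) / r * w (-r) :=
    (((measurable_mvnG H).comp (measurable_const.div measurable_id')).div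
      measurable_id').mul (hwc.measurable.comp measurable_neg)
  have hwb : ∀ r : ℝ, 0 < r → |w (-r)| ≤ r ^ γ * (1 + r) ^ δ := by
    intro r hr
    have h := hw 0 (-r) le_rfl (by linarith)
    simpa [hw0, abs_of_pos hr, abs_of_nonneg hr.le] using h
  refine integrableOn_split hmeas (p := γ - (H - 1/2) - 1) (q := γ + δ - 2)
    (C1 := Cg * t ^ (H - 1/2) * 2 ^ δ) (C2 := Cg * t * 2 ^ δ)
    (by linarith) (by linarith) ?_ ?_
  · intro r hr
    have hr0 : (0:ℝ) < r := hr.1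
    have hri : (0:ℝ) < r⁻¹ := inv_pos.mpr hr0
    have htr : (0:ℝ) < t/r := by positivity
    have hb1 : |mvnG H (t/r)| ≤ Cg * (t ^ (H - 1/2) * (r⁻¹) ^ (H - 1/2)) := by
      refine (hCg _ htr).trans ?_
      refine mul_le_mul_of_nonneg_left ((min_le_right _ _).trans (le_of_eq ?_)) hCg0
      rw [div_eq_mul_inv, Real.mul_rpow ht.le hri.le]
    have hb2 : |w (-r)| ≤ r ^ γ * 2 ^ δ := by
      refine (hwb r hr0).trans ?_
      refine mul_le_mul_of_nonneg_left
        (Real.rpow_le_rpow (by positivity) (by linarith [hr.2]) hδ0.le)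
        (rpow_nonneg hr0.le _)
    rw [abs_mul, abs_div, abs_of_pos hr0, div_eq_mul_inv]
    calc |mvnG H (t/r)| * r⁻¹ * |w (-r)|
        ≤ (Cg * (t ^ (H - 1/2) * (r⁻¹) ^ (H - 1/2))) * r⁻¹ * (r ^ γ * 2 ^ δ) := by
          refine mul_le_mul (mul_le_mul_of_nonneg_right hb1 hri.le) hb2
            (abs_nonneg _) (by positivity)
      _ = (Cg * t ^ (H - 1/2) * 2 ^ δ) * ((r⁻¹) ^ (H - 1/2) * r⁻¹ * r ^ γ) := by ring
      _ = (Cg * t ^ (H - 1/2) * 2 ^ δ) * r ^ (γ - (H - 1/2) - 1) := by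
          rw [pow_collapse' hr0]
  · intro r hr
    have hr0 : (0:ℝ) < r := lt_trans one_pos hr
    have hri : (0:ℝ) < r⁻¹ := inv_pos.mpr hr0
    have htr : (0:ℝ) < t/r := by positivity
    have hb1 : |mvnG H (t/r)| ≤ Cg * (t * r⁻¹) := by
      refine (hCg _ htr).trans ?_
      refine mul_le_mul_of_nonneg_left ((min_le_left _ _).trans (le_of_eq ?_)) hCg0
      rw [div_eq_mul_inv]
    have hb2 : |w (-r)| ≤ r ^ γ * (2 ^ δ * r ^ δ) := by
      refine (hwb r hr0).trans ?_
      refine mul_le_mul_of_nonneg_left ?_ (rpow_nonneg hr0.le _)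
      calc (1 + r) ^ δ ≤ (2 * r) ^ δ :=
            Real.rpow_le_rpow (by positivity) (by linarith [hr.out]) hδ0.le
        _ = 2 ^ δ * r ^ δ := Real.mul_rpow (by norm_num) hr0.le
    rw [abs_mul, abs_div, abs_of_pos hr0, div_eq_mul_inv]
    calc |mvnG H (t/r)| * r⁻¹ * |w (-r)|
        ≤ (Cg * (t * r⁻¹)) * r⁻¹ * (r ^ γ * (2 ^ δ * r ^ δ)) := by
          refine mul_le_mul (mul_le_mul_of_nonneg_right hb1 hri.le) hb2
            (abs_nonneg _) (by positivity)
      _ = (Cg * t * 2 ^ δ) * (r⁻¹ * r⁻¹ * (r ^ γ * r ^ δ)) := by ring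
      _ = (Cg * t * 2 ^ δ) * r ^ (γ + δ - 2) := by
          rw [← Real.rpow_add hr0, pow_collapse2 hr0]


lemma mvnG_zero : mvnG H 0 = 0 := by
  have h0 : H - 1/2 ≠ 0 := by intro hc; nlinarith
  unfold mvnG
  rw [Real.zero_rpow h0]
  ring

lemma subst_pos {t : ℝ} (ht : 0 < t) :
    ∫ r in Ioi (0:ℝ), mvnG H (t/r) / r * w (-r)
      = ∫ y in Ioi (0:ℝ), mvnG H y / y * w (-(t/y)) := by
  have e1 := MeasureTheory.integral_comp_rpow_Ioi
    (fun r => mvnG H (t/r) / r * w (-r)) (p := (-1:ℝ)) (by norm_num)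
  have e2 := MeasureTheory.integral_comp_mul_left_Ioi
    (fun y => mvnG H y / y * w (-(t/y)) * t) 0 ht
  rw [mul_zero] at e2
  have e3 : EqOn
      (fun x : ℝ => (|(-1:ℝ)| * x ^ ((-1:ℝ) - 1)) •
        ((fun r => mvnG H (t/r) / r * w (-r)) (x ^ (-1:ℝ))))
      (fun x : ℝ => (fun y => mvnG H y / y * w (-(t/y)) * t) (t * x)) (Ioi 0) := by
    intro x hx
    have hx0 : (0:ℝ) < x := hx
    simp only
    have hxp : x ^ ((-1:ℝ) - 1) = (x * x)⁻¹ := by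
      rw [show (-1:ℝ) - 1 = -2 by norm_num, Real.rpow_neg hx0.le,
        show (2:ℝ) = ((2:ℕ):ℝ) by norm_num, Real.rpow_natCast]
      norm_num [sq]
    rw [hxp, Real.rpow_neg_one, abs_neg, abs_one, one_mul, smul_eq_mul,
      show t / x⁻¹ = t * x by field_simp, show t / (t * x) = x⁻¹ by field_simp]
    field_simp
  rw [← e1, setIntegral_congr_fun measurableSet_Ioi e3, e2, integral_mul_const,
    smul_eq_mul]
  field_simp

lemma subst_formula {t : ℝ} (ht : 0 ≤ t) :
    ∫ r in Ioi (0:ℝ), mvnG H (t/r) / r * w (-r)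
      = ∫ y in Ioi (0:ℝ), mvnG H y / y * w (-(t/y)) := by
  rcases eq_or_lt_of_le ht with rfl | ht0
  · have l : ∀ r : ℝ, mvnG H ((0:ℝ)/r) / r * w (-r) = 0 := by
      intro r
      rw [zero_div, mvnG_zero h1 h2 hγ hγH hHδ hδ1 hwc hw0 hw, zero_div, zero_mul]
    have rres : ∀ y : ℝ, mvnG H y / y * w (-((0:ℝ)/y)) = 0 := by
      intro y
      rw [zero_div, neg_zero, hw0, mul_zero]
    simp only [l, rres, integral_zero]
  · exact subst_pos h1 h2 hγ hγH hHδ hδ1 hwc hw0 hw ht0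

end Main
end MVNaux

/-- Let `1/2 < γ < H` and `H < γ + δ < 1`. If `w : ℝ₋ → ℝ` satisfies
`|w t - w s| ≤ |t - s|^γ * (1 + |t| + |s|)^δ` for `s, t ≤ 0` and `w 0 = 0`, then
`(A w)(t) = β_H ∫₀^∞ (g (t/r) / r) * w (-r) dr` is well defined for `t ≥ 0` and there is a
constant `C` independent of `w` with `|A w t - A w s| ≤ C * (t-s)^γ * (1 + t + s)^δ` for all
`0 ≤ s ≤ t`; in particular `A` is a bounded linear operator from `W_(γ,δ)` into the
corresponding space on `ℝ₊`. -/
theorem mvn_operator_bounded (H γ δ β : ℝ) (hH : H ∈ Ioo (1/2 : ℝ) 1)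
    (hγ : 1/2 < γ) (hγH : γ < H) (hHδ : H < γ + δ) (hδ : γ + δ < 1) (hβ : 0 < β) :
    ∃ C : ℝ, 0 < C ∧ ∀ w : ℝ → ℝ, Continuous w → w 0 = 0 →
      (∀ s t : ℝ, s ≤ 0 → t ≤ 0 → |w t - w s| ≤ |t - s| ^ γ * (1 + |t| + |s|) ^ δ) →
      (∀ t : ℝ, 0 ≤ t →
        IntegrableOn (fun r => mvnG H (t / r) / r * w (-r)) (Ioi 0)) ∧
      ∀ s t : ℝ, 0 ≤ s → s ≤ t →
        |(β * ∫ r in Ioi (0:ℝ), mvnG H (t / r) / r * w (-r)) -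
            (β * ∫ r in Ioi (0:ℝ), mvnG H (s / r) / r * w (-r))| ≤
          C * (t - s) ^ γ * (1 + t + s) ^ δ := by
  obtain ⟨h1, h2⟩ := hH
  obtain ⟨Cg, hCg0, hCg⟩ := MVNaux.exists_gbound h1 h2
  set M := ∫ y in Ioi (0:ℝ), MVNaux.mfun H γ δ y with hMdef
  have hMnn : 0 ≤ M :=
    setIntegral_nonneg measurableSet_Ioi fun y hy => MVNaux.mfun_nonneg hy
  have hCpos : 0 < β * Cg * M + 1 := by
    nlinarith [mul_nonneg (mul_nonneg hβ.le hCg0.le) hMnn]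
  refine ⟨β * Cg * M + 1, hCpos, ?_⟩
  intro w hwc hw0 hw
  constructor
  · intro t ht
    rcases eq_or_lt_of_le ht with rfl | ht0
    · have l : (fun r : ℝ => mvnG H ((0:ℝ)/r) / r * w (-r)) = fun _ => (0:ℝ) := by
        funext r
        rw [zero_div, MVNaux.mvnG_zero h1 h2 hγ hγH hHδ hδ hwc hw0 hw,
          zero_div, zero_mul]
      rw [l]
      exact integrableOn_zero
    · exact MVNaux.integrableOn_T1 h1 h2 hγ hγH hHδ hδ hwc hw0 hw hCg0.le hCg ht0
  · intro s t hs hst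
    have ht : 0 ≤ t := le_trans hs hst
    have hts : 0 ≤ t - s := by linarith
    have h1ts : 0 ≤ 1 + t + s := by linarith
    rw [MVNaux.subst_formula h1 h2 hγ hγH hHδ hδ hwc hw0 hw ht,
      MVNaux.subst_formula h1 h2 hγ hγH hHδ hδ hwc hw0 hw hs]
    have hGt := MVNaux.integrableOn_G h1 h2 hγ hγH hHδ hδ hwc hw0 hw hCg0.le hCg ht
    have hGs := MVNaux.integrableOn_G h1 h2 hγ hγH hHδ hδ hwc hw0 hw hCg0.le hCg hs
    rw [← mul_sub, ← integral_sub hGt hGs, abs_mul, abs_of_pos hβ]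
    have hbound : |∫ y in Ioi (0:ℝ),
          (mvnG H y / y * w (-(t/y)) - mvnG H y / y * w (-(s/y)))| ≤
        (Cg * (t - s) ^ γ * (1 + t + s) ^ δ) * M := by
      rw [← Real.norm_eq_abs]
      refine le_trans (norm_integral_le_integral_norm _) ?_
      have hmono : (∫ y in Ioi (0:ℝ),
            ‖mvnG H y / y * w (-(t/y)) - mvnG H y / y * w (-(s/y))‖) ≤
          ∫ y in Ioi (0:ℝ), (Cg * (t - s) ^ γ * (1 + t + s) ^ δ) * MVNaux.mfun H γ δ y := by
        refine integral_mono_of_nonneg (ae_of_all _ fun y => norm_nonneg _)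
          ((MVNaux.integrableOn_mfun h1 h2 hγ hγH hHδ hδ).const_mul _) ?_
        filter_upwards [ae_restrict_mem measurableSet_Ioi] with y hy
        rw [Real.norm_eq_abs, ← mul_sub]
        exact MVNaux.pointwise_bound h1 h2 hγ hγH hHδ hδ hwc hw0 hw hCg0.le hCg
          hy hs hst
      rw [MeasureTheory.integral_const_mul] at hmono
      exact hmono
    calc β * |∫ y in Ioi (0:ℝ),
          (mvnG H y / y * w (-(t/y)) - mvnG H y / y * w (-(s/y)))|
        ≤ β * ((Cg * (t - s) ^ γ * (1 + t + s) ^ δ) * M) :=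
          mul_le_mul_of_nonneg_left hbound hβ.le
      _ ≤ (β * Cg * M + 1) * (t - s) ^ γ * (1 + t + s) ^ δ := by
          nlinarith [mul_nonneg (Real.rpow_nonneg hts γ) (Real.rpow_nonneg h1ts δ)]
end

section
/- Suppose H ∈ (1/2, 1) and there exists C₀ with |D^{H−1/2} h'(t)| ≤ C₀ min{1, t^{−H−1/2}} for all t > 0, where g satisfies |g(y)| ≤ C min{y, y^{H−1/2}}. Then the function φ(t) = ∫₀^∞ g(y) y^{−H−3/2} (D^{H−1/2} h')(t/y) dy satisfies |φ(t)| ≤ C' min{t^{−1}, t^{1/2−H}} for some constant C', and consequently φ ∈ L²(ℝ₊). -/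
set_option maxHeartbeats 1000000

open Set MeasureTheory

open Real

lemma measurable_mvnG (H : ℝ) : Measurable (mvnG H) := by
  have h1 : mvnG H = fun x => x ^ (H - 1/2) + (H - 3/2) * x *
      ∫ u in Ioc (0:ℝ) 1, (u + x) ^ (H - 5/2) * (1 - u) ^ (1/2 - H) := by
    funext x
    rw [mvnG, intervalIntegral.integral_of_le zero_le_one]
  rw [h1]
  have h2 : StronglyMeasurable (fun p : ℝ × ℝ =>
      (p.2 + p.1) ^ (H - 5/2) * (1 - p.2) ^ (1/2 - H)) :=
    (((measurable_snd.add measurable_fst).pow measurable_const).mul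
      ((measurable_const.sub measurable_snd).pow measurable_const)).stronglyMeasurable
  exact (measurable_id.pow measurable_const).add
    ((measurable_const.mul measurable_id).mul
      (h2.integral_prod_right' (ν := volume.restrict (Ioc (0:ℝ) 1))).measurable)

lemma mvnG_bounds (H : ℝ) (hH : H ∈ Ioo (1/2 : ℝ) 1) :
    ∃ Cg : ℝ, 0 ≤ Cg ∧ ∀ y : ℝ, 0 < y →
      |mvnG H y| ≤ Cg * y ∧ |mvnG H y| ≤ Cg * y ^ (H - 1/2) := by
  obtain ⟨hH1, hH2⟩ := hH
  -- integrability of (1-u)^r on Ioc 0 1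
  have hint_one_sub : ∀ r : ℝ, -1 < r → IntegrableOn (fun u : ℝ => (1 - u) ^ r) (Ioc 0 1) := by
    intro r hr
    have h := (intervalIntegral.intervalIntegrable_rpow' (a := 0) (b := 1) hr).comp_sub_left 1
    norm_num at h
    exact (intervalIntegrable_iff_integrableOn_Ioc_of_le zero_le_one).mp h.symm
  have hint_rpow : ∀ r : ℝ, -1 < r → IntegrableOn (fun u : ℝ => u ^ r) (Ioc 0 1) := fun r hr =>
    (intervalIntegrable_iff_integrableOn_Ioc_of_le zero_le_one).mp
      (intervalIntegral.intervalIntegrable_rpow' hr)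
  have hcont : ∀ y : ℝ, 0 < y → ContinuousOn (fun u : ℝ => (u + y) ^ (H - 5/2)) (Icc 0 1) := by
    intro y hy
    apply ContinuousOn.rpow_const ((continuous_id.add continuous_const).continuousOn)
    intro u hu
    exact Or.inl (by have := hu.1; exact (by linarith : (0:ℝ) < u + y).ne')
  -- the constants
  have hAint : IntegrableOn (fun u : ℝ => u ^ (H - 5/2)) (Ioi 1) :=
    integrableOn_Ioi_rpow_of_lt (by linarith) one_pos
  obtain ⟨A, hA⟩ : ∃ A : ℝ, A = ∫ u in Ioi (1:ℝ), u ^ (H - 5/2) := ⟨_, rfl⟩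
  have hA0 : 0 ≤ A := hA ▸
    setIntegral_nonneg measurableSet_Ioi fun u hu => rpow_nonneg (by have := mem_Ioi.mp hu; linarith) _
  have hDint : IntegrableOn (fun u : ℝ => 2 * u ^ (H - 3/2) + 4 * (1 - u) ^ (-(1/2) : ℝ)) (Ioc 0 1) :=
    ((hint_rpow _ (by linarith)).const_mul 2).add ((hint_one_sub _ (by norm_num)).const_mul 4)
  obtain ⟨D, hD⟩ : ∃ D : ℝ, D = ∫ u in Ioc (0:ℝ) 1, (2 * u ^ (H - 3/2) + 4 * (1 - u) ^ (-(1/2) : ℝ)) := ⟨_, rfl⟩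
  have hD0 : 0 ≤ D := by
    rw [hD]
    apply setIntegral_nonneg measurableSet_Ioc
    intro u hu
    have h1 : 0 ≤ u := hu.1.le
    have h2 : 0 ≤ 1 - u := by linarith [hu.2]
    positivity
  have hBint : IntegrableOn (fun u : ℝ => (1 - u) ^ (1/2 - H)) (Ioc 0 1) :=
    hint_one_sub _ (by linarith)
  obtain ⟨B, hB⟩ : ∃ B : ℝ, B = ∫ u in Ioc (0:ℝ) 1, (1 - u) ^ (1/2 - H) := ⟨_, rfl⟩
  have hB0 : 0 ≤ B := by
    rw [hB]
    apply setIntegral_nonneg measurableSet_Ioc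
    intro u hu
    exact rpow_nonneg (by linarith [hu.2]) _
  have hc : (0:ℝ) < 3/2 - H := by linarith
  -- per-y integrability facts
  have hJ1 : ∀ y : ℝ, 0 < y → IntegrableOn (fun u : ℝ => (u + y) ^ (H - 5/2)) (Ioc 0 1) := by
    intro y hy
    exact ((hcont y hy).integrableOn_compact isCompact_Icc).mono_set Ioc_subset_Icc_self
  have hI : ∀ y : ℝ, 0 < y →
      IntegrableOn (fun u : ℝ => (u + y) ^ (H - 5/2) * (1 - u) ^ (1/2 - H)) (Ioc 0 1) := by
    intro y hy
    have h1 : IntegrableOn (fun u : ℝ => (1 - u) ^ (1/2 - H)) (Icc 0 1) :=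
      (integrableOn_Icc_iff_integrableOn_Ioc).mpr hBint
    exact (h1.continuousOn_mul (hcont y hy) isCompact_Icc).mono_set Ioc_subset_Icc_self
  have hI0 : ∀ y : ℝ, 0 < y →
      0 ≤ ∫ u in Ioc (0:ℝ) 1, (u + y) ^ (H - 5/2) * (1 - u) ^ (1/2 - H) := by
    intro y hy
    apply setIntegral_nonneg measurableSet_Ioc
    intro u hu
    exact mul_nonneg (rpow_nonneg (by linarith [hu.1]) _) (rpow_nonneg (by linarith [hu.2]) _)
  have hJ2 : ∀ y : ℝ, 0 < y → IntegrableOn (fun u : ℝ => (u + y) ^ (H - 5/2)) (Ioi 1) := by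
    intro y hy
    refine Integrable.mono hAint (((measurable_id.add_const y).pow measurable_const).aestronglyMeasurable) ?_
    filter_upwards [self_mem_ae_restrict measurableSet_Ioi] with u hu
    have h1u : (1:ℝ) < u := hu
    rw [Real.norm_eq_abs, Real.norm_eq_abs, abs_of_nonneg (rpow_nonneg (by linarith) _),
      abs_of_nonneg (rpow_nonneg (by linarith) _)]
    exact rpow_le_rpow_of_nonpos (by linarith) (by linarith) (by linarith)
  have hJ2le : ∀ y : ℝ, 0 < y → ∫ u in Ioi (1:ℝ), (u + y) ^ (H - 5/2) ≤ A := by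
    intro y hy
    rw [hA]
    apply setIntegral_mono_on (hJ2 y hy) hAint measurableSet_Ioi
    intro u hu
    have h1u : (1:ℝ) < u := mem_Ioi.mp hu
    exact rpow_le_rpow_of_nonpos (by linarith) (by linarith) (by linarith)
  have hJ20 : ∀ y : ℝ, 0 < y → 0 ≤ ∫ u in Ioi (1:ℝ), (u + y) ^ (H - 5/2) := by
    intro y hy
    apply setIntegral_nonneg measurableSet_Ioi
    intro u hu
    exact rpow_nonneg (by have := mem_Ioi.mp hu; linarith) _
  -- the exact value of the full-line integral
  have hJval : ∀ y : ℝ, 0 < y →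
      ∫ u in Ioi (0:ℝ), (u + y) ^ (H - 5/2) = y ^ (H - 3/2) / (3/2 - H) := by
    intro y hy
    have hpre : (fun u : ℝ => u + y) ⁻¹' (Ioi y) = Ioi 0 := by ext u; simp
    have hmp : MeasurePreserving (fun u : ℝ => u + y) volume volume :=
      measurePreserving_add_right volume y
    have h := hmp.setIntegral_preimage_emb (measurableEmbedding_addRight y)
      (fun v => v ^ (H - 5/2)) (Ioi y)
    rw [hpre] at h
    rw [h, integral_Ioi_rpow_of_lt (by linarith) hy, show H - 5/2 + 1 = H - 3/2 by ring]
    rw [div_eq_div_iff (by linarith) (by linarith)]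
    ring
  -- small-scale bound: |mvnG H y| ≤ (3/2-H)*(D+A)*y  for all y > 0
  have keyS : ∀ y : ℝ, 0 < y → |mvnG H y| ≤ ((3/2 - H) * (D + A)) * y := by
    intro y hy
    have hIoisplit : ∫ u in Ioi (0:ℝ), (u + y) ^ (H - 5/2)
        = (∫ u in Ioc (0:ℝ) 1, (u + y) ^ (H - 5/2)) + ∫ u in Ioi (1:ℝ), (u + y) ^ (H - 5/2) := by
      rw [← setIntegral_union (Ioc_disjoint_Ioi le_rfl) measurableSet_Ioi (hJ1 y hy) (hJ2 y hy),
        Ioc_union_Ioi_eq_Ioi zero_le_one]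
    have hsum : (∫ u in Ioc (0:ℝ) 1, (u + y) ^ (H - 5/2))
        + (∫ u in Ioi (1:ℝ), (u + y) ^ (H - 5/2)) = y ^ (H - 3/2) / (3/2 - H) := by
      rw [← hIoisplit, hJval y hy]
    have hpow : y ^ (H - 1/2) = y * y ^ (H - 3/2) := by
      rw [show H - 1/2 = 1 + (H - 3/2) by ring, rpow_add hy, rpow_one]
    have hkey : mvnG H y = (3/2 - H) * y *
        ((∫ u in Ioc (0:ℝ) 1,
            ((u + y) ^ (H - 5/2) - (u + y) ^ (H - 5/2) * (1 - u) ^ (1/2 - H)))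
          + ∫ u in Ioi (1:ℝ), (u + y) ^ (H - 5/2)) := by
      rw [integral_sub (hJ1 y hy) (hI y hy)]
      rw [mvnG, intervalIntegral.integral_of_le zero_le_one]
      have hcne : (3/2 - H : ℝ) ≠ 0 := ne_of_gt hc
      have hsum' : (3/2 - H) * ((∫ u in Ioc (0:ℝ) 1, (u + y) ^ (H - 5/2))
          + ∫ u in Ioi (1:ℝ), (u + y) ^ (H - 5/2)) = y ^ (H - 3/2) := by
        rw [hsum, mul_comm, div_mul_cancel₀ _ hcne]
      linear_combination hpow - y * hsum'
    -- bound on the Ioc part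
    have hX1 : |∫ u in Ioc (0:ℝ) 1,
        ((u + y) ^ (H - 5/2) - (u + y) ^ (H - 5/2) * (1 - u) ^ (1/2 - H))| ≤ D := by
      rw [hD, ← Real.norm_eq_abs]
      apply norm_integral_le_of_norm_le hDint
      have hne : ∀ᵐ u : ℝ ∂volume, u ≠ 1 := by
        rw [ae_iff]
        simp only [ne_eq, not_not, setOf_eq_eq_singleton]
        exact Real.volume_singleton
      filter_upwards [ae_restrict_of_ae hne, self_mem_ae_restrict measurableSet_Ioc] with u hu1 hu
      have hu0 : 0 < u := hu.1
      have hult : u < 1 := lt_of_le_of_ne hu.2 hu1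
      have h1u : 0 < 1 - u := by linarith
      have hf0 : 0 ≤ (u + y) ^ (H - 5/2) := rpow_nonneg (by linarith) _
      have hg1 : 1 ≤ (1 - u) ^ (1/2 - H) := by
        calc (1:ℝ) = (1 - u) ^ (0:ℝ) := (rpow_zero _).symm
        _ ≤ (1 - u) ^ (1/2 - H) :=
          rpow_le_rpow_of_exponent_ge h1u (by linarith) (by linarith)
      rw [Real.norm_eq_abs, ← mul_one_sub, abs_mul, abs_of_nonneg hf0, abs_sub_comm,
        abs_of_nonneg (by linarith : (0:ℝ) ≤ (1 - u) ^ (1/2 - H) - 1)]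
      rcases le_or_gt u (1/2) with hu2 | hu2
      · have e1 : (u + y) ^ (H - 5/2) ≤ u ^ (H - 5/2) :=
          rpow_le_rpow_of_nonpos hu0 (by linarith) (by linarith)
        have e2 : (1 - u) ^ (1/2 - H) ≤ (1 - u)⁻¹ := by
          rw [← Real.rpow_neg_one]
          exact rpow_le_rpow_of_exponent_ge h1u (by linarith) (by linarith)
        have e3 : (1 - u)⁻¹ - 1 ≤ 2 * u := by
          have h2 : (1 - u)⁻¹ - 1 = u / (1 - u) := by field_simp; ring
          rw [h2, div_le_iff₀ h1u]
          nlinarith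
        have e4 : 0 ≤ 4 * (1 - u) ^ (-(1/2) : ℝ) := by positivity
        calc (u + y) ^ (H - 5/2) * ((1 - u) ^ (1/2 - H) - 1)
            ≤ u ^ (H - 5/2) * (2 * u) :=
              mul_le_mul e1 (by linarith) (by linarith) (rpow_nonneg hu0.le _)
        _ = 2 * u ^ (H - 3/2) := by
            rw [show H - 3/2 = (H - 5/2) + 1 by ring, rpow_add hu0, rpow_one]; ring
        _ ≤ 2 * u ^ (H - 3/2) + 4 * (1 - u) ^ (-(1/2) : ℝ) := by linarith
      · have e1 : (u + y) ^ (H - 5/2) ≤ 4 := by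
          calc (u + y) ^ (H - 5/2) ≤ (1/2 : ℝ) ^ (H - 5/2) :=
              rpow_le_rpow_of_nonpos one_half_pos (by linarith) (by linarith)
          _ ≤ 4 := by
              rw [show (1/2 : ℝ) = 2⁻¹ by norm_num, Real.inv_rpow (by norm_num),
                ← Real.rpow_neg (by norm_num)]
              calc (2:ℝ) ^ (-(H - 5/2)) ≤ 2 ^ (2:ℝ) :=
                  rpow_le_rpow_of_exponent_le one_le_two (by linarith)
              _ = 4 := by
                  rw [show (2:ℝ) = ((2:ℕ):ℝ) by norm_num]
                  rw [Real.rpow_natCast]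
                  norm_num
        have e2 : (1 - u) ^ (1/2 - H) - 1 ≤ (1 - u) ^ (-(1/2) : ℝ) := by
          have h2 : (1 - u) ^ (1/2 - H) ≤ (1 - u) ^ (-(1/2) : ℝ) :=
            rpow_le_rpow_of_exponent_ge h1u (by linarith) (by linarith)
          linarith
        have e4 : 0 ≤ 2 * u ^ (H - 3/2) := by positivity
        calc (u + y) ^ (H - 5/2) * ((1 - u) ^ (1/2 - H) - 1)
            ≤ 4 * (1 - u) ^ (-(1/2) : ℝ) :=
              mul_le_mul e1 e2 (by linarith) (by norm_num)
        _ ≤ 2 * u ^ (H - 3/2) + 4 * (1 - u) ^ (-(1/2) : ℝ) := by linarith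
    obtain ⟨X1, hX1eq⟩ : ∃ X1 : ℝ, X1 = ∫ u in Ioc (0:ℝ) 1,
        ((u + y) ^ (H - 5/2) - (u + y) ^ (H - 5/2) * (1 - u) ^ (1/2 - H)) := ⟨_, rfl⟩
    obtain ⟨X2, hX2eq⟩ : ∃ X2 : ℝ, X2 = ∫ u in Ioi (1:ℝ), (u + y) ^ (H - 5/2) := ⟨_, rfl⟩
    rw [← hX1eq, ← hX2eq] at hkey
    have hX1' : |X1| ≤ D := hX1eq ▸ hX1
    have hX2' : |X2| ≤ A := by
      rw [hX2eq, abs_of_nonneg (hJ20 y hy)]; exact hJ2le y hy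
    have hXsum : |X1 + X2| ≤ D + A := (abs_add_le _ _).trans (by linarith)
    rw [hkey, abs_mul, abs_mul, abs_of_pos hc, abs_of_pos hy]
    have h5 := mul_le_mul_of_nonneg_left hXsum (mul_nonneg hc.le hy.le)
    refine le_trans (le_of_eq (by ring)) (h5.trans (le_of_eq (by ring)))
  -- large-scale bound
  have keyL : ∀ y : ℝ, 1 ≤ y → |mvnG H y| ≤ (1 + (3/2 - H) * B) * y ^ (H - 1/2) := by
    intro y hy1
    have hy : 0 < y := lt_of_lt_of_le one_pos hy1
    have hIle : ∫ u in Ioc (0:ℝ) 1, (u + y) ^ (H - 5/2) * (1 - u) ^ (1/2 - H)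
        ≤ y ^ (H - 5/2) * B := by
      rw [hB, ← integral_const_mul]
      apply setIntegral_mono_on (hI y hy) (hBint.const_mul _) measurableSet_Ioc
      intro u hu
      exact mul_le_mul_of_nonneg_right
        (rpow_le_rpow_of_nonpos hy (by linarith [hu.1]) (by linarith))
        (rpow_nonneg (by linarith [hu.2]) _)
    have habs : |mvnG H y| ≤ y ^ (H - 1/2) + (3/2 - H) * y *
        ∫ u in Ioc (0:ℝ) 1, (u + y) ^ (H - 5/2) * (1 - u) ^ (1/2 - H) := by
      rw [mvnG, intervalIntegral.integral_of_le zero_le_one]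
      refine (abs_add_le _ _).trans ?_
      rw [abs_of_nonneg (rpow_nonneg hy.le _), abs_mul, abs_mul,
        abs_of_neg (by linarith : H - 3/2 < 0), abs_of_pos hy,
        abs_of_nonneg (hI0 y hy)]
      have : -(H - 3/2) = 3/2 - H := by ring
      rw [this]
    refine habs.trans ?_
    have h2 : (3/2 - H) * y * (∫ u in Ioc (0:ℝ) 1, (u + y) ^ (H - 5/2) * (1 - u) ^ (1/2 - H))
        ≤ (3/2 - H) * B * y ^ (H - 3/2) := by
      calc (3/2 - H) * y * (∫ u in Ioc (0:ℝ) 1, (u + y) ^ (H - 5/2) * (1 - u) ^ (1/2 - H))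
          ≤ (3/2 - H) * y * (y ^ (H - 5/2) * B) :=
            mul_le_mul_of_nonneg_left hIle (by positivity)
      _ = (3/2 - H) * B * (y * y ^ (H - 5/2)) := by ring
      _ = (3/2 - H) * B * y ^ (H - 3/2) := by
          rw [show H - 3/2 = 1 + (H - 5/2) by ring, rpow_add hy, rpow_one]
    have h3 : y ^ (H - 3/2) ≤ y ^ (H - 1/2) :=
      rpow_le_rpow_of_exponent_le hy1 (by linarith)
    have h4 : 0 ≤ (3/2 - H) * B := by positivity
    nlinarith [rpow_nonneg hy.le (H - 1/2)]
  -- assemble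
  refine ⟨max ((3/2 - H) * (D + A)) (1 + (3/2 - H) * B), ?_, ?_⟩
  · exact le_trans (by positivity) (le_max_left _ _)
  intro y hy
  constructor
  · exact (keyS y hy).trans (mul_le_mul_of_nonneg_right (le_max_left _ _) hy.le)
  · rcases le_or_gt y 1 with hy1 | hy1
    · have hyr : y ≤ y ^ (H - 1/2) := by
        calc y = y ^ (1:ℝ) := (rpow_one y).symm
        _ ≤ y ^ (H - 1/2) := rpow_le_rpow_of_exponent_ge hy hy1 (by linarith)
      refine (keyS y hy).trans ?_
      exact mul_le_mul (le_max_left _ _) hyr hy.le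
        (le_trans (by positivity) (le_max_left _ _))
    · refine (keyL y hy1.le).trans ?_
      exact mul_le_mul_of_nonneg_right (le_max_right _ _) (rpow_nonneg hy.le _)

/-- Let `H ∈ (1/2, 1)` and suppose `ψ = D^(H-1/2) h'` satisfies
`|ψ t| ≤ C₀ * min 1 (t^(-(H+1/2)))` for `t > 0`.  Then
`φ t = ∫₀^∞ g y * y^(-(H+3/2)) * ψ (t/y) dy` satisfies
`|φ t| ≤ C' * min t⁻¹ (t^(1/2-H))` for some `C'`, and consequently `φ ∈ L²(ℝ₊)`. -/
theorem mvn_fracDeriv_L2 (H : ℝ) (hH : H ∈ Ioo (1/2 : ℝ) 1)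
    (ψ : ℝ → ℝ) (hψm : Measurable ψ) (C₀ : ℝ)
    (hψ : ∀ t : ℝ, 0 < t → |ψ t| ≤ C₀ * min 1 (t ^ (-(H + 1/2)))) :
    (∃ C' : ℝ, ∀ t : ℝ, 0 < t →
      |∫ y in Ioi (0:ℝ), mvnG H y * y ^ (-(H + 3/2)) * ψ (t / y)| ≤
        C' * min t⁻¹ (t ^ (1/2 - H))) ∧
    MemLp (fun t => ∫ y in Ioi (0:ℝ), mvnG H y * y ^ (-(H + 3/2)) * ψ (t / y)) 2
      (volume.restrict (Ioi 0)) := by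
  obtain ⟨hH1, hH2⟩ := hH
  obtain ⟨Cg, hCg0, hCg⟩ := mvnG_bounds H ⟨hH1, hH2⟩
  have hC₀ : 0 ≤ C₀ := by
    have h := hψ 1 one_pos
    rw [Real.one_rpow, min_self, mul_one] at h
    exact le_trans (abs_nonneg _) h
  -- generic estimate
  have hmain : ∀ p : ℝ, p < -1 → -1 < p + (H + 1/2) →
      (∀ y : ℝ, 0 < y → |mvnG H y| ≤ Cg * y ^ (p + (H + 3/2))) →
      ∃ K : ℝ, 0 ≤ K ∧ ∀ t : ℝ, 0 < t →
        |∫ y in Ioi (0:ℝ), mvnG H y * y ^ (-(H + 3/2)) * ψ (t / y)| ≤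
          (Cg * C₀ * K) * t ^ (p + 1) := by
    intro p hp1 hpq hb
    have hFm : Measurable (fun z : ℝ => z ^ p * min 1 (z ^ (H + 1/2))) :=
      (measurable_id.pow measurable_const).mul
        (measurable_const.min (measurable_id.pow measurable_const))
    have hF0 : ∀ z : ℝ, 0 < z → 0 ≤ z ^ p * min 1 (z ^ (H + 1/2)) := fun z hz =>
      mul_nonneg (rpow_nonneg hz.le _) (le_min zero_le_one (rpow_nonneg hz.le _))
    have hFes1 : IntegrableOn (fun z : ℝ => z ^ p * min 1 (z ^ (H + 1/2))) (Ioc 0 1) := by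
      have hg : IntegrableOn (fun z : ℝ => z ^ (p + (H + 1/2))) (Ioc 0 1) :=
        (intervalIntegrable_iff_integrableOn_Ioc_of_le zero_le_one).mp
          (intervalIntegral.intervalIntegrable_rpow' hpq)
      refine Integrable.mono hg hFm.aestronglyMeasurable ?_
      filter_upwards [self_mem_ae_restrict measurableSet_Ioc] with z hz
      have hz0 : (0:ℝ) < z := hz.1
      rw [Real.norm_eq_abs, Real.norm_eq_abs, abs_of_nonneg (hF0 z hz0),
        abs_of_nonneg (rpow_nonneg hz0.le _)]
      calc z ^ p * min 1 (z ^ (H + 1/2)) ≤ z ^ p * z ^ (H + 1/2) :=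
            mul_le_mul_of_nonneg_left (min_le_right _ _) (rpow_nonneg hz0.le _)
      _ = z ^ (p + (H + 1/2)) := (rpow_add hz0 _ _).symm
    have hFes2 : IntegrableOn (fun z : ℝ => z ^ p * min 1 (z ^ (H + 1/2))) (Ioi 1) := by
      refine Integrable.mono (integrableOn_Ioi_rpow_of_lt hp1 one_pos)
        hFm.aestronglyMeasurable ?_
      filter_upwards [self_mem_ae_restrict measurableSet_Ioi] with z hz
      have hz0 : (0:ℝ) < z := lt_trans one_pos hz
      rw [Real.norm_eq_abs, Real.norm_eq_abs, abs_of_nonneg (hF0 z hz0),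
        abs_of_nonneg (rpow_nonneg hz0.le _)]
      calc z ^ p * min 1 (z ^ (H + 1/2)) ≤ z ^ p * 1 :=
            mul_le_mul_of_nonneg_left (min_le_left _ _) (rpow_nonneg hz0.le _)
      _ = z ^ p := mul_one _
    have hFint : IntegrableOn (fun z : ℝ => z ^ p * min 1 (z ^ (H + 1/2))) (Ioi 0) := by
      rw [← Ioc_union_Ioi_eq_Ioi (zero_le_one : (0:ℝ) ≤ 1)]
      exact hFes1.union hFes2
    refine ⟨∫ z in Ioi (0:ℝ), z ^ p * min 1 (z ^ (H + 1/2)),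
      setIntegral_nonneg measurableSet_Ioi (fun z hz => hF0 z hz), ?_⟩
    intro t ht
    have hscale_int : IntegrableOn
        (fun y : ℝ => (y / t) ^ p * min 1 ((y / t) ^ (H + 1/2))) (Ioi 0) := by
      have hdiv : ∀ y : ℝ, y / t = t⁻¹ * y := fun y => div_eq_inv_mul y t
      simp_rw [hdiv]
      refine (integrableOn_Ioi_comp_mul_left_iff
        (fun z : ℝ => z ^ p * min 1 (z ^ (H + 1/2))) 0 (inv_pos.mpr ht)).mpr ?_
      simpa using hFint
    have hscale_val : ∫ y in Ioi (0:ℝ), ((y / t) ^ p * min 1 ((y / t) ^ (H + 1/2)))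
        = t * ∫ z in Ioi (0:ℝ), (z ^ p * min 1 (z ^ (H + 1/2))) := by
      have hdiv : ∀ y : ℝ, y / t = t⁻¹ * y := fun y => div_eq_inv_mul y t
      simp_rw [hdiv]
      rw [MeasureTheory.integral_comp_mul_left_Ioi
        (fun z : ℝ => z ^ p * min 1 (z ^ (H + 1/2))) 0 (inv_pos.mpr ht)]
      rw [mul_zero, inv_inv, smul_eq_mul]
    have hdom : ∀ᵐ y ∂(volume.restrict (Ioi (0:ℝ))),
        ‖mvnG H y * y ^ (-(H + 3/2)) * ψ (t / y)‖ ≤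
          (Cg * C₀ * t ^ p) * ((y / t) ^ p * min 1 ((y / t) ^ (H + 1/2))) := by
      filter_upwards [self_mem_ae_restrict measurableSet_Ioi] with y hy0
      have hy : (0:ℝ) < y := hy0
      have hty : 0 < t / y := div_pos ht hy
      have h3 := hψ (t / y) hty
      have h4 : (t / y) ^ (-(H + 1/2)) = (y / t) ^ (H + 1/2) := by
        rw [Real.rpow_neg (div_nonneg ht.le hy.le), show y / t = (t / y)⁻¹ by rw [inv_div],
          Real.inv_rpow (div_nonneg ht.le hy.le)]
      rw [h4] at h3
      have e1 : y ^ (p + (H + 3/2)) * y ^ (-(H + 3/2)) = y ^ p := by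
        rw [← rpow_add hy, show p + (H + 3/2) + -(H + 3/2) = p by ring]
      have e2 : t ^ p * (y / t) ^ p = y ^ p := by
        rw [← Real.mul_rpow ht.le (div_nonneg hy.le ht.le),
          show t * (y / t) = y by field_simp]
      rw [Real.norm_eq_abs, abs_mul, abs_mul, abs_of_nonneg (rpow_nonneg hy.le (-(H + 3/2)))]
      calc |mvnG H y| * y ^ (-(H + 3/2)) * |ψ (t / y)|
          ≤ (Cg * y ^ (p + (H + 3/2))) * y ^ (-(H + 3/2)) *
              (C₀ * min 1 ((y / t) ^ (H + 1/2))) := by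
            apply mul_le_mul (mul_le_mul_of_nonneg_right (hb y hy) (rpow_nonneg hy.le _)) h3
              (abs_nonneg _)
            exact mul_nonneg (mul_nonneg hCg0 (rpow_nonneg hy.le _)) (rpow_nonneg hy.le _)
      _ = (Cg * C₀ * t ^ p) * ((y / t) ^ p * min 1 ((y / t) ^ (H + 1/2))) := by
            linear_combination Cg * C₀ * min 1 ((y / t) ^ (H + 1/2)) * (e1 - e2)
    have hGint : Integrable (fun y : ℝ =>
        (Cg * C₀ * t ^ p) * ((y / t) ^ p * min 1 ((y / t) ^ (H + 1/2))))
        (volume.restrict (Ioi 0)) := hscale_int.const_mul _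
    have hnorm := norm_integral_le_of_norm_le hGint hdom
    rw [Real.norm_eq_abs] at hnorm
    calc |∫ y in Ioi (0:ℝ), mvnG H y * y ^ (-(H + 3/2)) * ψ (t / y)|
        ≤ ∫ y in Ioi (0:ℝ), (Cg * C₀ * t ^ p) *
            ((y / t) ^ p * min 1 ((y / t) ^ (H + 1/2))) := hnorm
    _ = (Cg * C₀ * t ^ p) * (t * ∫ z in Ioi (0:ℝ), (z ^ p * min 1 (z ^ (H + 1/2)))) := by
        rw [integral_const_mul, hscale_val]
    _ = (Cg * C₀ * (∫ z in Ioi (0:ℝ), (z ^ p * min 1 (z ^ (H + 1/2))))) * t ^ (p + 1) := by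
        rw [rpow_add ht, rpow_one]; ring
  -- instantiate
  obtain ⟨K₁, hK₁0, hK₁⟩ := hmain (-(H + 1/2)) (by linarith) (by linarith) (by
    intro y hy
    rw [show -(H + 1/2) + (H + 3/2) = 1 by ring, rpow_one]
    exact (hCg y hy).1)
  obtain ⟨K₂, hK₂0, hK₂⟩ := hmain (-2) (by norm_num) (by linarith) (by
    intro y hy
    rw [show (-2 : ℝ) + (H + 3/2) = H - 1/2 by ring]
    exact (hCg y hy).2)
  have hb1 : ∀ t : ℝ, 0 < t →
      |∫ y in Ioi (0:ℝ), mvnG H y * y ^ (-(H + 3/2)) * ψ (t / y)| ≤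
        (Cg * C₀ * K₁) * t ^ (1/2 - H) := by
    intro t ht
    have := hK₁ t ht
    rwa [show -(H + 1/2) + 1 = 1/2 - H by ring] at this
  have hb2 : ∀ t : ℝ, 0 < t →
      |∫ y in Ioi (0:ℝ), mvnG H y * y ^ (-(H + 3/2)) * ψ (t / y)| ≤
        (Cg * C₀ * K₂) * t⁻¹ := by
    intro t ht
    have := hK₂ t ht
    rwa [show (-2 : ℝ) + 1 = -1 by norm_num, Real.rpow_neg_one] at this
  have hc10 : 0 ≤ Cg * C₀ * K₁ := mul_nonneg (mul_nonneg hCg0 hC₀) hK₁0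
  have hc20 : 0 ≤ Cg * C₀ * K₂ := mul_nonneg (mul_nonneg hCg0 hC₀) hK₂0
  have hbound : ∀ t : ℝ, 0 < t →
      |∫ y in Ioi (0:ℝ), mvnG H y * y ^ (-(H + 3/2)) * ψ (t / y)| ≤
        (Cg * C₀ * K₁ + Cg * C₀ * K₂) * min t⁻¹ (t ^ (1/2 - H)) := by
    intro t ht
    rcases le_total t⁻¹ (t ^ (1/2 - H)) with h | h
    · rw [min_eq_left h]
      refine (hb2 t ht).trans ?_
      exact mul_le_mul_of_nonneg_right (by linarith) (inv_nonneg.mpr ht.le)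
    · rw [min_eq_right h]
      refine (hb1 t ht).trans ?_
      exact mul_le_mul_of_nonneg_right (by linarith) (rpow_nonneg ht.le _)
  refine ⟨⟨_, hbound⟩, ?_⟩
  -- measurability of φ
  have hφmeas : AEStronglyMeasurable
      (fun t => ∫ y in Ioi (0:ℝ), mvnG H y * y ^ (-(H + 3/2)) * ψ (t / y))
      (volume.restrict (Ioi 0)) := by
    have hf : StronglyMeasurable (fun q : ℝ × ℝ =>
        mvnG H q.2 * q.2 ^ (-(H + 3/2)) * ψ (q.1 / q.2)) :=
      ((((measurable_mvnG H).comp measurable_snd).mul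
          (measurable_snd.pow measurable_const)).mul
        (hψm.comp (measurable_fst.div measurable_snd))).stronglyMeasurable
    exact ((hf.integral_prod_right'
      (ν := volume.restrict (Ioi (0:ℝ)))).measurable.aestronglyMeasurable).restrict
  -- the dominating function is in L²
  have hgmeas : AEStronglyMeasurable (fun t : ℝ => min t⁻¹ (t ^ (1/2 - H)))
      (volume.restrict (Ioi 0)) :=
    (measurable_inv.min (measurable_id.pow measurable_const)).aestronglyMeasurable
  have hgL2 : MemLp (fun t : ℝ => min t⁻¹ (t ^ (1/2 - H))) 2 (volume.restrict (Ioi 0)) := by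
    rw [memLp_two_iff_integrable_sq hgmeas]
    have h1 : IntegrableOn (fun t : ℝ => (min t⁻¹ (t ^ (1/2 - H))) ^ 2) (Ioc 0 1) := by
      have hg : IntegrableOn (fun t : ℝ => t ^ (1 - 2 * H)) (Ioc 0 1) :=
        (intervalIntegrable_iff_integrableOn_Ioc_of_le zero_le_one).mp
          (intervalIntegral.intervalIntegrable_rpow' (by linarith))
      refine Integrable.mono hg
        ((measurable_inv.min (measurable_id.pow measurable_const)).pow
            measurable_const).aestronglyMeasurable ?_
      filter_upwards [self_mem_ae_restrict measurableSet_Ioc] with t htm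
      have ht : (0:ℝ) < t := htm.1
      have hmin0 : 0 ≤ min t⁻¹ (t ^ (1/2 - H)) :=
        le_min (inv_nonneg.mpr ht.le) (rpow_nonneg ht.le _)
      rw [Real.norm_eq_abs, Real.norm_eq_abs, abs_of_nonneg (by positivity),
        abs_of_nonneg (rpow_nonneg ht.le _)]
      calc (min t⁻¹ (t ^ (1/2 - H))) ^ 2 ≤ (t ^ (1/2 - H)) ^ 2 :=
            pow_le_pow_left₀ hmin0 (min_le_right _ _) 2
      _ = t ^ (1 - 2 * H) := by
          rw [sq, ← rpow_add ht, show 1/2 - H + (1/2 - H) = 1 - 2 * H by ring]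
    have h2 : IntegrableOn (fun t : ℝ => (min t⁻¹ (t ^ (1/2 - H))) ^ 2) (Ioi 1) := by
      have hg : IntegrableOn (fun t : ℝ => t ^ (-2 : ℝ)) (Ioi 1) :=
        integrableOn_Ioi_rpow_of_lt (by norm_num) one_pos
      refine Integrable.mono hg
        ((measurable_inv.min (measurable_id.pow measurable_const)).pow
            measurable_const).aestronglyMeasurable ?_
      filter_upwards [self_mem_ae_restrict measurableSet_Ioi] with t htm
      have ht : (0:ℝ) < t := lt_trans one_pos htm
      have hmin0 : 0 ≤ min t⁻¹ (t ^ (1/2 - H)) :=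
        le_min (inv_nonneg.mpr ht.le) (rpow_nonneg ht.le _)
      rw [Real.norm_eq_abs, Real.norm_eq_abs, abs_of_nonneg (by positivity),
        abs_of_nonneg (rpow_nonneg ht.le _)]
      calc (min t⁻¹ (t ^ (1/2 - H))) ^ 2 ≤ (t⁻¹) ^ 2 :=
            pow_le_pow_left₀ hmin0 (min_le_left _ _) 2
      _ = t ^ (-2 : ℝ) := by
          rw [sq, ← Real.rpow_neg_one t, ← rpow_add ht]
          norm_num
    have : IntegrableOn (fun t : ℝ => (min t⁻¹ (t ^ (1/2 - H))) ^ 2) (Ioi 0) := by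
      rw [← Ioc_union_Ioi_eq_Ioi (zero_le_one : (0:ℝ) ≤ 1)]
      exact h1.union h2
    exact this
  have hbL2 : MemLp (fun t : ℝ => (Cg * C₀ * K₁ + Cg * C₀ * K₂) * min t⁻¹ (t ^ (1/2 - H))) 2
      (volume.restrict (Ioi 0)) := hgL2.const_mul _
  refine MemLp.of_le hbL2 hφmeas ?_
  filter_upwards [self_mem_ae_restrict measurableSet_Ioi] with t htm
  have ht : (0:ℝ) < t := htm
  rw [Real.norm_eq_abs, Real.norm_eq_abs]
  exact (hbound t ht).trans (le_abs_self _)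
end

section
/- Let f : ℝ^d → ℝ^d be Lipschitz and satisfy the dissipativity condition ⟨f(x), x⟩ ≤ C(1 − ‖x‖²) for all x. Then for solutions of the ODE ż = f(z), z(0) = x₀: (a) there exists γ > 0 and C' such that ‖z(t)‖^p ≤ e^{−γ t} ‖x₀‖^p + C' for all t ≥ 0 and p ≥ 1; (b) there exists C'' such that ‖z(s) − z(r)‖ ≤ C'' |s − r| (1 + ‖x₀‖) for all s, r ∈ [0,1]. -/
/-!
`V = ‖z‖²` is a Lyapunov function: along the flow `V' = 2⟪f z, z⟫ ≤ 2C(1 - V)`, and for `q ≥ 1`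
the inequality `2 V^(q-1) ≤ 2^q + V^q` turns this into `(V^q)' ≤ Cq (2^q - V^q)`, so `V^q` relaxes
exponentially to below `2^q`. In particular `‖z t‖ ≤ ‖z 0‖ + 2`, so the Lipschitz (hence linearly
growing) field `ż = f z` is bounded by a multiple of `1 + ‖z 0‖`, and the mean value theorem
gives the Lipschitz bound in time.
-/

open Set
open scoped RealInnerProductSpace

namespace Real

lemma mul_rpow_sub_one_le_rpow_add_rpow {a c q : ℝ} (ha : 0 ≤ a) (hc : 0 ≤ c) (hq : 1 ≤ q) :
    c * a ^ (q - 1) ≤ c ^ q + a ^ q := by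
  have hq' : 0 ≤ q - 1 := by linarith
  rcases le_total a c with hac | hca
  · calc c * a ^ (q - 1) ≤ c * c ^ (q - 1) := by gcongr
      _ = c ^ q := by rw [← rpow_one_add' hc (by linarith), add_sub_cancel]
      _ ≤ c ^ q + a ^ q := le_add_of_nonneg_right (rpow_nonneg ha q)
  · calc c * a ^ (q - 1) ≤ a * a ^ (q - 1) := by gcongr
      _ = a ^ q := by rw [← rpow_one_add' ha (by linarith), add_sub_cancel]
      _ ≤ c ^ q + a ^ q := le_add_of_nonneg_left (rpow_nonneg hc q)

end Real

lemma le_exp_mul_add_of_hasDerivAt_le {g g' : ℝ → ℝ} {γ B : ℝ} (hg : ∀ t, HasDerivAt g (g' t) t)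
    (hle : ∀ t, g' t ≤ γ * (B - g t)) (hB : 0 ≤ B) {t : ℝ} (ht : 0 ≤ t) :
    g t ≤ Real.exp (-γ * t) * g 0 + B := by
  set h : ℝ → ℝ := fun t => Real.exp (γ * t) * (g t - B)
  have hh : ∀ t, HasDerivAt h (Real.exp (γ * t) * (γ * (g t - B) + g' t)) t := fun t => by
    have := (((hasDerivAt_id t).const_mul γ).exp).mul ((hg t).sub_const B)
    exact this.congr_deriv (by simp only [id]; ring)
  have h_anti : Antitone h := by
    refine antitone_of_deriv_nonpos (fun t => (hh t).differentiableAt) fun t => ?_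
    rw [(hh t).deriv]
    exact mul_nonpos_of_nonneg_of_nonpos (Real.exp_pos _).le (by linarith [hle t])
  have key : Real.exp (γ * t) * (g t - B) ≤ g 0 - B := by simpa [h] using h_anti ht
  have hexp : Real.exp (-γ * t) * Real.exp (γ * t) = 1 := by
    rw [← Real.exp_add]; simp
  have := mul_le_mul_of_nonneg_left key (Real.exp_pos (-γ * t)).le
  rw [← mul_assoc, hexp, one_mul] at this
  nlinarith [Real.exp_pos (-γ * t)]

lemma LipschitzWith.norm_le_norm_zero_add_mul {E F : Type*} [SeminormedAddCommGroup E]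
    [SeminormedAddCommGroup F] {f : E → F} {K : NNReal} (hf : LipschitzWith K f) (x : E) :
    ‖f x‖ ≤ ‖f 0‖ + K * ‖x‖ := by
  calc ‖f x‖ ≤ ‖f 0‖ + ‖f x - f 0‖ := norm_le_norm_add_norm_sub' _ _
    _ ≤ ‖f 0‖ + K * ‖x‖ := by simpa [dist_eq_norm] using hf.dist_le_mul x 0

section Dissipative

variable {E : Type*} [NormedAddCommGroup E] [InnerProductSpace ℝ E] {f : E → E} {C : ℝ}
  {z : ℝ → E}

lemma sq_norm_rpow_le_of_dissipative (hC : 0 ≤ C) (hdiss : ∀ x, ⟪f x, x⟫ ≤ C * (1 - ‖x‖ ^ 2))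
    (hz : ∀ t, HasDerivAt z (f (z t)) t) {q : ℝ} (hq : 1 ≤ q) {t : ℝ} (ht : 0 ≤ t) :
    (‖z t‖ ^ 2) ^ q ≤ Real.exp (-(C * q) * t) * (‖z 0‖ ^ 2) ^ q + 2 ^ q := by
  have hderiv : ∀ t, HasDerivAt (fun t => (‖z t‖ ^ 2) ^ q)
      (q * (‖z t‖ ^ 2) ^ (q - 1) * (2 * ⟪z t, f (z t)⟫)) t := fun t => by
    simpa [mul_comm, mul_assoc, mul_left_comm] using (hz t).norm_sq.rpow_const (Or.inr hq)
  refine le_exp_mul_add_of_hasDerivAt_le hderiv (fun t => ?_) (by positivity) ht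
  set a := ‖z t‖ ^ 2
  have ha : 0 ≤ a := sq_nonneg _
  have hpow : a ^ (q - 1) * a = a ^ q := by
    rw [← Real.rpow_add_one' ha (by linarith), sub_add_cancel]
  have hinner : 2 * ⟪z t, f (z t)⟫ ≤ 2 * (C * (1 - a)) := by
    rw [real_inner_comm]; linarith [hdiss (z t)]
  have hyoung := Real.mul_rpow_sub_one_le_rpow_add_rpow ha zero_le_two hq
  calc q * a ^ (q - 1) * (2 * ⟪z t, f (z t)⟫)
      ≤ q * a ^ (q - 1) * (2 * (C * (1 - a))) := by gcongr
    _ = C * q * (2 * a ^ (q - 1) - 2 * (a ^ (q - 1) * a)) := by ring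
    _ ≤ C * q * (2 ^ q - a ^ q) := by
      rw [hpow]; exact mul_le_mul_of_nonneg_left (by linarith) (by positivity)

lemma norm_rpow_le_of_dissipative (hC : 0 ≤ C) (hdiss : ∀ x, ⟪f x, x⟫ ≤ C * (1 - ‖x‖ ^ 2))
    (hz : ∀ t, HasDerivAt z (f (z t)) t) {p : ℝ} (hp : 1 ≤ p) {t : ℝ} (ht : 0 ≤ t) :
    ‖z t‖ ^ p ≤ Real.exp (-(C * (p / 2)) * t) * ‖z 0‖ ^ p + 2 ^ (p / 2) := by
  have hsq : ∀ x : E, (‖x‖ ^ 2) ^ (p / 2) = ‖x‖ ^ p := fun x => by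
    rw [← Real.rpow_natCast, ← Real.rpow_mul (norm_nonneg x)]; ring_nf
  rcases le_total 2 p with h2p | hp2
  · simpa only [hsq] using sq_norm_rpow_le_of_dissipative hC hdiss hz (q := p / 2) (by linarith) ht
  -- for `p ≤ 2` raise the `q = 1` bound to the power `p / 2 ≤ 1`, which is subadditive
  have h1 := sq_norm_rpow_le_of_dissipative hC hdiss hz le_rfl ht
  simp only [Real.rpow_one, mul_one] at h1
  calc ‖z t‖ ^ p = (‖z t‖ ^ 2) ^ (p / 2) := (hsq _).symm
    _ ≤ (Real.exp (-C * t) * ‖z 0‖ ^ 2 + 2) ^ (p / 2) := by gcongr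
    _ ≤ (Real.exp (-C * t) * ‖z 0‖ ^ 2) ^ (p / 2) + 2 ^ (p / 2) :=
      Real.rpow_add_le_add_rpow (by positivity) zero_le_two (by linarith) (by linarith)
    _ = Real.exp (-(C * (p / 2)) * t) * ‖z 0‖ ^ p + 2 ^ (p / 2) := by
      rw [Real.mul_rpow (by positivity) (by positivity), ← Real.exp_mul, hsq]; ring_nf

lemma norm_le_norm_zero_add_two_of_dissipative (hC : 0 ≤ C)
    (hdiss : ∀ x, ⟪f x, x⟫ ≤ C * (1 - ‖x‖ ^ 2)) (hz : ∀ t, HasDerivAt z (f (z t)) t) {t : ℝ}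
    (ht : 0 ≤ t) : ‖z t‖ ≤ ‖z 0‖ + 2 := by
  have h := norm_rpow_le_of_dissipative hC hdiss hz le_rfl ht
  simp only [Real.rpow_one] at h
  have hexp : Real.exp (-(C * (1 / 2)) * t) ≤ 1 := Real.exp_le_one_iff.2 (by nlinarith)
  have hsqrt : (2 : ℝ) ^ (1 / 2 : ℝ) ≤ 2 :=
    Real.rpow_le_self_of_one_le one_le_two (by norm_num)
  nlinarith [norm_nonneg (z 0)]

lemma norm_sub_le_of_dissipative_of_lipschitzWith {K : NNReal} (hf : LipschitzWith K f)
    (hC : 0 ≤ C) (hdiss : ∀ x, ⟪f x, x⟫ ≤ C * (1 - ‖x‖ ^ 2))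
    (hz : ∀ t, HasDerivAt z (f (z t)) t) {s r : ℝ} (hs : 0 ≤ s) (hr : 0 ≤ r) :
    ‖z s - z r‖ ≤ (‖f 0‖ + 2 * K) * |s - r| * (1 + ‖z 0‖) := by
  have hbound : ∀ t ∈ Ici (0 : ℝ), ‖f (z t)‖ ≤ (‖f 0‖ + 2 * K) * (1 + ‖z 0‖) := fun t ht => by
    have hzt := norm_le_norm_zero_add_two_of_dissipative hC hdiss hz ht
    calc ‖f (z t)‖ ≤ ‖f 0‖ + K * ‖z t‖ := hf.norm_le_norm_zero_add_mul _
      _ ≤ ‖f 0‖ + K * (‖z 0‖ + 2) := by gcongr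
      _ ≤ (‖f 0‖ + 2 * K) * (1 + ‖z 0‖) := by
        nlinarith [norm_nonneg (f 0), norm_nonneg (z 0), K.coe_nonneg]
  have := (convex_Ici 0).norm_image_sub_le_of_norm_hasDerivWithin_le
    (fun t _ => (hz t).hasDerivWithinAt) hbound hr hs
  rwa [Real.norm_eq_abs, mul_right_comm] at this

end Dissipative

/-- Let `f : ℝ^d → ℝ^d` be Lipschitz and dissipative: `⟪f x, x⟫ ≤ C (1 - ‖x‖²)`.  Then for
solutions of `ż = f z`, `z 0 = x₀`:
(a) for every `p ≥ 1` there are `γ > 0` and `C'` with `‖z t‖^p ≤ exp (-γ t) ‖x₀‖^p + C'` for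
all `t ≥ 0`;
(b) there is `C''` with `‖z s - z r‖ ≤ C'' |s - r| (1 + ‖x₀‖)` for all `s, r ∈ [0,1]`. -/
theorem dissipative_ode_bounds {d : ℕ}
    (f : EuclideanSpace ℝ (Fin d) → EuclideanSpace ℝ (Fin d))
    (K : NNReal) (hf : LipschitzWith K f)
    (C : ℝ) (hC : 0 < C)
    (hdiss : ∀ x : EuclideanSpace ℝ (Fin d), ⟪f x, x⟫ ≤ C * (1 - ‖x‖ ^ 2)) :
    (∀ p : ℝ, 1 ≤ p → ∃ γ : ℝ, 0 < γ ∧ ∃ C' : ℝ,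
      ∀ (x₀ : EuclideanSpace ℝ (Fin d)) (z : ℝ → EuclideanSpace ℝ (Fin d)),
        z 0 = x₀ → (∀ t : ℝ, HasDerivAt z (f (z t)) t) →
        ∀ t : ℝ, 0 ≤ t → ‖z t‖ ^ p ≤ Real.exp (-γ * t) * ‖x₀‖ ^ p + C') ∧
    (∃ C'' : ℝ,
      ∀ (x₀ : EuclideanSpace ℝ (Fin d)) (z : ℝ → EuclideanSpace ℝ (Fin d)),
        z 0 = x₀ → (∀ t : ℝ, HasDerivAt z (f (z t)) t) →
        ∀ s ∈ Icc (0:ℝ) 1, ∀ r ∈ Icc (0:ℝ) 1,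
          ‖z s - z r‖ ≤ C'' * |s - r| * (1 + ‖x₀‖)) := by
  refine ⟨fun p hp => ⟨C * (p / 2), by positivity, 2 ^ (p / 2), ?_⟩, ⟨‖f 0‖ + 2 * K, ?_⟩⟩
  · rintro x₀ z rfl hz t ht
    exact norm_rpow_le_of_dissipative hC.le hdiss hz hp ht
  · rintro x₀ z rfl hz s hs r hr
    exact norm_sub_le_of_dissipative_of_lipschitzWith hf hC.le hdiss hz hs.1 hr.1
end
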